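/- arXiv:2402.06612 — 4 statements merged into one kernel-verified Lean document; each statement's English description precedes it below -/
import Mathlib

section
/- Fix a finite alphabet Σ, an integer d ≥ 2, and a finite set W of words over Σ each of length at most d; call a word over Σ admissible if no element of W is a factor of it. Let ā_n denote the number of ≼-maximal coherent sequences (C_0, …, C_n), and let a_n denote the number of ≼-maximal prolongable sequences (C_0, …, C_n). Then both generating functions ∑_{n≥0} ā_n t^n and ∑_{n≥0} a_n t^n are rational functions; equivalently, the sequences (ā_n) and (a_n) eventually satisfy linear recurrences with constant coefficients. -/
noncomputable section

/-- A word is admissible if it contains no forbidden factor from `W`. -/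
def Admissible {s : ℕ} (W : Finset (List (Fin s))) (u : List (Fin s)) : Prop :=
  ∀ v ∈ W, ¬ v <:+: u

/-- The sequence `(C_0,…,C_n)` of nonempty subsets of the alphabet is *coherent*:
every word `u_0 u_1 ⋯ u_n` with `u_i ∈ C_i` is admissible. -/
def CoherentSeq {s : ℕ} (W : Finset (List (Fin s))) {n : ℕ}
    (C : Fin (n + 1) → Finset (Fin s)) : Prop :=
  (∀ i, (C i).Nonempty) ∧
    ∀ f : Fin (n + 1) → Fin s, (∀ i, f i ∈ C i) → Admissible W (List.ofFn f)

/-- The sequence `(C_0,…,C_n)` is *prolongable*: it extends to an infinite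
sequence of nonempty subsets all of whose segment words are admissible. -/
def ProlongableSeq {s : ℕ} (W : Finset (List (Fin s))) {n : ℕ}
    (C : Fin (n + 1) → Finset (Fin s)) : Prop :=
  ∃ D : ℕ → Finset (Fin s),
    (∀ i, (D i).Nonempty) ∧ (∀ i : Fin (n + 1), D (i : ℕ) = C i) ∧
      ∀ (i len : ℕ) (f : Fin len → Fin s),
        (∀ k : Fin len, f k ∈ D (i + (k : ℕ))) → Admissible W (List.ofFn f)

/-- `≼`-maximal coherent sequences. -/
def MaxCoherent {s : ℕ} (W : Finset (List (Fin s))) {n : ℕ}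
    (C : Fin (n + 1) → Finset (Fin s)) : Prop :=
  CoherentSeq W C ∧
    ∀ C' : Fin (n + 1) → Finset (Fin s),
      CoherentSeq W C' → (∀ i, C i ⊆ C' i) → C' = C

/-- `≼`-maximal prolongable sequences. -/
def MaxProlongable {s : ℕ} (W : Finset (List (Fin s))) {n : ℕ}
    (C : Fin (n + 1) → Finset (Fin s)) : Prop :=
  ProlongableSeq W C ∧
    ∀ C' : Fin (n + 1) → Finset (Fin s),
      ProlongableSeq W C' → (∀ i, C i ⊆ C' i) → C' = C

/-! Both maximality conditions are local: whether `(C_0, …, C_n)` is maximal coherent (resp.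
maximal prolongable) can be read off from the windows `C_{i-d}, …, C_{i+d}` (resp. of radius
`d + 1`) of the sequence padded by `none` on both sides. For prolongability this rests on the
observation that, forbidden words having length at most `d`, a coherent sequence is prolongable
iff its last `d` columns admit an infinite admissible continuation.

Sequences all of whose windows satisfy a fixed local rule form a regular language: a DFA only
has to remember the last `2 r` letters read. The number of words of length `n` accepted by a DFA
is `uᵀ Mⁿ v` for its transfer matrix `M`, and by Cayley–Hamilton such a sequence satisfies a
linear recurrence, hence has a rational generating function. -/

open Polynomial Finset Matrix

namespace PowerSeries

def IsRational {R : Type*} [CommSemiring R] (f : PowerSeries R) : Prop :=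
  ∃ p q : R[X], q ≠ 0 ∧ f * q = p

variable {R : Type*} [CommRing R]

theorem isRational_mk_of_recurrence [Nontrivial R] {a : ℕ → R} {p : R[X]} (hp : p.Monic)
    (h : ∀ m, ∑ i ∈ range (p.natDegree + 1), p.coeff i * a (m + i) = 0) :
    (mk a).IsRational := by
  set k := p.natDegree
  -- the reciprocal polynomial `X ^ k * p (1 / X)`
  set q : R[X] := ∑ i ∈ range (k + 1), Polynomial.C (p.coeff i) * Polynomial.X ^ (k - i)
  have hq : q.coeff 0 = 1 := by
    rw [finsetSum_coeff, sum_eq_single k]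
    · simp only [Polynomial.coeff_C_mul_X_pow, Nat.sub_self, if_true]
      exact hp
    · intro i hi hik
      rw [Polynomial.coeff_C_mul_X_pow, if_neg]
      have := mem_range.1 hi
      omega
    · simp
  have hcoeff : ∀ m, k ≤ m → coeff m (mk a * (q : R⟦X⟧)) = 0 := by
    intro m hm
    rw [← coeToPowerSeries.ringHom_apply, map_sum, mul_sum, map_sum, ← h (m - k)]
    refine sum_congr rfl fun i hi => ?_
    have := mem_range.1 hi
    rw [map_mul coeToPowerSeries.ringHom, map_pow, coeToPowerSeries.ringHom_apply,
      coeToPowerSeries.ringHom_apply, Polynomial.coe_C, Polynomial.coe_X, mul_left_comm,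
      coeff_C_mul, coeff_mul_X_pow', if_pos (by omega), coeff_mk]
    congr 2
    omega
  refine ⟨trunc k (mk a * q), q, fun h0 => by simp [h0] at hq, ?_⟩
  ext m
  rw [Polynomial.coeff_coe, coeff_trunc]
  split_ifs with hm
  · rfl
  · exact hcoeff m (by omega)

theorem isRational_mk_pow_mulVec [Nontrivial R] {ι : Type*} [Fintype ι] [DecidableEq ι]
    (M : Matrix ι ι R) (v : ι → R) (j : ι) : (mk fun n => (M ^ n *ᵥ v) j).IsRational := by
  refine isRational_mk_of_recurrence M.charpoly_monic fun m => ?_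
  have hCH := M.aeval_self_charpoly
  rw [aeval_eq_sum_range] at hCH
  set χ := M.charpoly
  calc ∑ i ∈ range (χ.natDegree + 1), χ.coeff i * (M ^ (m + i) *ᵥ v) j
      = ((M ^ m * ∑ i ∈ range (χ.natDegree + 1), χ.coeff i • M ^ i) *ᵥ v) j := by
        simp [mul_sum, pow_add, Matrix.sum_mulVec, Matrix.smul_mulVec, Finset.sum_apply]
    _ = 0 := by rw [hCH]; simp

theorem isRational_mk_succ {a : ℕ → R} (h : (mk a).IsRational) :
    (mk fun n => a (n + 1)).IsRational := by
  obtain ⟨p, q, hq, hpq⟩ := h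
  refine ⟨p - Polynomial.C (a 0) * q, Polynomial.X * q, fun h0 => hq ?_, ?_⟩
  · ext n
    simpa using congrArg (Polynomial.coeff · (n + 1)) h0
  rw [eq_shift_mul_X_add_const (mk a)] at hpq
  simp only [coeff_mk, constantCoeff_mk] at hpq
  push_cast
  rw [← hpq]
  ring

end PowerSeries

section Counting

open scoped Classical

namespace DFA

variable {α σ : Type*} [Fintype α] [Fintype σ] (M : DFA α σ)

def transferMatrix : Matrix σ σ ℚ := fun s t => #{a | M.step s a = t}

theorem card_evalFrom_mem_accept (n : ℕ) (s : σ) :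
    (Nat.card {f : Fin n → α // M.evalFrom s (List.ofFn f) ∈ M.accept} : ℚ) =
      (M.transferMatrix ^ n *ᵥ M.accept.indicator 1) s := by
  induction n generalizing s with
  | zero =>
    by_cases hs : s ∈ M.accept <;> simp [hs]
  | succ n ih =>
    have hsplit : Nat.card {f : Fin (n + 1) → α // M.evalFrom s (List.ofFn f) ∈ M.accept} =
        ∑ a, Nat.card {g : Fin n → α //
          M.evalFrom (M.step s a) (List.ofFn g) ∈ M.accept} := by
      rw [← Nat.card_sigma]
      refine Nat.card_congr ((Equiv.subtypeEquiv (Fin.consEquiv fun _ => α).symm fun f => ?_).trans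
        (Equiv.subtypeProdEquivSigmaSubtype fun a g =>
          M.evalFrom (M.step s a) (List.ofFn g) ∈ M.accept))
      simp only [List.ofFn_succ, evalFrom_cons, Fin.consEquiv, Equiv.symm_mk, Equiv.coe_fn_mk]
      rfl
    set N : σ → ℚ := M.transferMatrix ^ n *ᵥ M.accept.indicator 1
    calc (Nat.card {f : Fin (n + 1) → α // M.evalFrom s (List.ofFn f) ∈ M.accept} : ℚ)
        = ∑ a, N (M.step s a) := by rw [hsplit]; push_cast; simp only [ih]
      _ = ∑ t, ∑ a with M.step s a = t, N t := (sum_fiberwise' _ _ _).symm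
      _ = (M.transferMatrix ^ (n + 1) *ᵥ M.accept.indicator 1) s := by
        rw [pow_succ', ← mulVec_mulVec]
        simp [mulVec, dotProduct, transferMatrix, N]

end DFA

theorem Language.IsRegular.isRational_card {α : Type*} [Fintype α] {L : Language α}
    (hL : L.IsRegular) :
    PowerSeries.IsRational
      (PowerSeries.mk fun n => (Nat.card {f : Fin n → α // List.ofFn f ∈ L} : ℚ)) := by
  obtain ⟨σ, _, M, rfl⟩ := hL
  simpa only [DFA.mem_accepts, DFA.eval, DFA.card_evalFrom_mem_accept] using
    PowerSeries.isRational_mk_pow_mulVec M.transferMatrix (M.accept.indicator 1) M.start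

end Counting

namespace List

variable {α : Type*}

def padNone (l : List α) (i : ℤ) : Option α := if 0 ≤ i then l[i.toNat]? else none

theorem padNone_eq_none_of_length_le {l : List α} {i : ℤ} (h : l.length ≤ i) :
    l.padNone i = none := by
  unfold padNone
  split_ifs
  · exact getElem?_eq_none (by omega)
  · rfl

theorem padNone_eq_some_iff {l : List α} {i : ℤ} {a : α} :
    l.padNone i = some a ↔ ∃ k, ∃ h : k < l.length, (k : ℤ) = i ∧ l[k] = a := by
  unfold padNone
  split_ifs with hi
  · rw [getElem?_eq_some_iff]
    constructor
    · rintro ⟨h, rfl⟩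
      exact ⟨i.toNat, h, Int.toNat_of_nonneg hi, rfl⟩
    · rintro ⟨k, h, rfl, rfl⟩
      exact ⟨h, rfl⟩
  · simp only [false_iff, not_exists, not_and]
    intro k _ hk
    omega

theorem padNone_append_singleton (l : List α) (a : α) (i : ℤ) :
    (l ++ [a]).padNone i = if i = l.length then some a else l.padNone i := by
  unfold padNone
  split_ifs with h0 hi hi <;> try omega
  · simp [hi]
  · rw [getElem?_append]
    split_ifs with hlt
    · rfl
    · rw [getElem?_eq_none (l := l) (by omega),
        getElem?_eq_none (by simp only [length_cons, length_nil]; omega)]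
  · rfl

theorem infix_iff_padNone {v u : List α} :
    v <:+: u ↔ ∃ j : ℤ, ∀ m (hm : m < v.length), u.padNone (j + m) = some v[m] := by
  rw [infix_iff_getElem?]
  constructor
  · rintro ⟨k, -, h⟩
    refine ⟨k, fun m hm => ?_⟩
    rw [padNone, if_pos (by omega), ← h m hm]
    congr 1
    omega
  · rintro ⟨j, h⟩
    rcases eq_or_ne v [] with rfl | hv
    · exact ⟨0, by simp, fun m hm => absurd hm (by simp)⟩
    have hpos := length_pos_iff.2 hv
    obtain ⟨k, hk, hkj, -⟩ := padNone_eq_some_iff.1 (h 0 hpos)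
    obtain ⟨k', hk', hkj', -⟩ := padNone_eq_some_iff.1 (h (v.length - 1) (by omega))
    refine ⟨k, by omega, fun m hm => ?_⟩
    rw [← h m hm, padNone, if_pos (by omega)]
    congr 1
    omega

variable {n : ℕ}

theorem padNone_ofFn_eq_some {C : Fin n → α} {i : ℤ} {a : α} :
    (ofFn C).padNone i = some a ↔ ∃ k : Fin n, (k : ℤ) = i ∧ C k = a := by
  rw [padNone_eq_some_iff]
  constructor
  · rintro ⟨k, h, hk, rfl⟩
    exact ⟨⟨k, by simpa using h⟩, hk, by simp⟩
  · rintro ⟨k, hk, rfl⟩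
    exact ⟨k, by simp, hk, by simp⟩

theorem padNone_ofFn_coe (C : Fin n → α) (k : Fin n) : (ofFn C).padNone k = some (C k) :=
  padNone_ofFn_eq_some.2 ⟨k, rfl, rfl⟩

theorem forall_padNone_ofFn_eq_some {C : Fin n → α} {P : ℤ → α → Prop} :
    (∀ i a, (ofFn C).padNone i = some a → P i a) ↔ ∀ k : Fin n, P k (C k) := by
  refine ⟨fun h k => h k _ (padNone_ofFn_coe C k), fun h i a ha => ?_⟩
  obtain ⟨k, rfl, rfl⟩ := padNone_ofFn_eq_some.1 ha
  exact h k

theorem padNone_ofFn_update (C : Fin n → α) (k : Fin n) (a : α) :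
    (ofFn (Function.update C k a)).padNone = Function.update (ofFn C).padNone k (some a) := by
  funext i
  by_cases hi : ∃ k' : Fin n, (k' : ℤ) = i
  · obtain ⟨k', rfl⟩ := hi
    simp only [Function.update_apply, padNone_ofFn_coe, Nat.cast_inj, Fin.val_inj]
    split_ifs <;> rfl
  · simp only [not_exists] at hi
    have hnone : ∀ D : Fin n → α, (ofFn D).padNone i = none := fun D =>
      Option.eq_none_iff_forall_ne_some.2 fun b hb =>
        let ⟨k', hk', _⟩ := padNone_ofFn_eq_some.1 hb
        hi k' hk'
    rw [hnone, Function.update_apply, if_neg (fun h => hi k h.symm), hnone]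

theorem padNone_ofFn_last_ne_none (C : Fin (n + 1) → α) : (ofFn C).padNone n ≠ none := by
  have hlast := padNone_ofFn_coe C (Fin.last n)
  rw [Fin.val_last] at hlast
  rw [hlast]
  exact Option.some_ne_none _

theorem padNone_ofFn_ne_none_and_succ_eq_none_iff {C : Fin (n + 1) → α} {i : ℤ} :
    (ofFn C).padNone i ≠ none ∧ (ofFn C).padNone (i + 1) = none ↔ i = n := by
  constructor
  · rintro ⟨h1, h2⟩
    obtain ⟨a, ha⟩ := Option.ne_none_iff_exists'.1 h1
    obtain ⟨k, rfl, -⟩ := padNone_ofFn_eq_some.1 ha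
    by_contra hk
    have hk' : (k : ℕ) + 1 < n + 1 := by omega
    have hsome := padNone_ofFn_coe C ⟨k + 1, hk'⟩
    push_cast at hsome
    exact Option.some_ne_none _ (hsome.symm.trans h2)
  · rintro rfl
    exact ⟨padNone_ofFn_last_ne_none C, padNone_eq_none_of_length_le (by simp)⟩

end List

namespace Language

open scoped Classical

variable {α : Type*}

def ofLocalRule (G : (ℤ → Option α) → Prop) : Language α :=
  {l | ∀ i : ℤ, G fun j => l.padNone (i + j)}

section LocalDFA

variable (w : ℕ)

def windowExt (τ : Fin w → Option α) (k : ℤ) : Option α :=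
  if h : 0 ≤ k ∧ k < w then τ ⟨k.toNat, by omega⟩ else none

def lastWindow (l : List α) : Fin w → Option α := fun k => l.padNone (l.length - w + k)

def snocWindow (τ : Fin w → Option α) (a : α) : ℤ → Option α :=
  Function.update (windowExt w τ) w (some a)

theorem windowExt_lastWindow (l : List α) {k : ℤ} (hk : 0 ≤ k) :
    windowExt w (lastWindow w l) k = l.padNone (l.length - w + k) := by
  unfold windowExt lastWindow
  split_ifs with h
  · simp [Int.toNat_of_nonneg hk]
  · exact (List.padNone_eq_none_of_length_le (by omega)).symm

theorem snocWindow_lastWindow (l : List α) (a : α) {k : ℤ} (hk : 0 ≤ k) :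
    snocWindow w (lastWindow w l) a k = (l ++ [a]).padNone (l.length - w + k) := by
  rw [snocWindow, Function.update_apply, windowExt_lastWindow w l hk,
    List.padNone_append_singleton]
  split_ifs <;> first | omega | rfl

theorem lastWindow_append_singleton (l : List α) (a : α) :
    lastWindow w (l ++ [a]) = fun k : Fin w => snocWindow w (lastWindow w l) a ((k : ℤ) + 1) := by
  funext k
  rw [snocWindow_lastWindow w l a (by omega), lastWindow]
  congr 1
  simp only [List.length_append, List.length_singleton]
  push_cast
  ring

variable (G : (ℤ → Option α) → Prop) (r : ℕ)

-- `G` holds at every centre whose window `[i - r, i + r]` ends inside `l`.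
def GoodUpTo (l : List α) : Prop := ∀ i : ℤ, i + r < l.length → G fun j => l.padNone (i + j)

-- The state is the window of the last `2 * r` letters read (padded by `none`), or `none` once a
-- window has violated `G`; reading a letter completes the window centred `r` positions back.
def localDFA : DFA α (Option (Fin (2 * r) → Option α)) where
  step o a := o.bind fun τ =>
    if G fun j => snocWindow (2 * r) τ a (r + j) then
      some fun k : Fin (2 * r) => snocWindow (2 * r) τ a ((k : ℤ) + 1)
    else none
  start := if G fun _ => none then some fun _ => none else none
  accept := {o | ∃ τ, o = some τ ∧ ∀ t : ℕ, G fun j => windowExt (2 * r) τ (r + t + j)}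

variable {G r}

theorem goodUpTo_nil : GoodUpTo G r [] ↔ G fun _ => none := by
  simp only [GoodUpTo, List.padNone, List.getElem?_nil, ite_self, List.length_nil,
    Nat.cast_zero]
  exact ⟨fun h => h (-r - 1) (by omega), fun h _ _ => h⟩

theorem goodUpTo_append_singleton (hG : DependsOn G (Set.Icc (-(r : ℤ)) r)) (l : List α)
    (a : α) : GoodUpTo G r (l ++ [a]) ↔
      GoodUpTo G r l ∧ G fun j => snocWindow (2 * r) (lastWindow (2 * r) l) a (r + j) := by
  have hold : ∀ i : ℤ, i + r < l.length →
      ((G fun j => (l ++ [a]).padNone (i + j)) ↔ G fun j => l.padNone (i + j)) := by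
    refine fun i hi => iff_of_eq (hG fun j hj => ?_)
    rw [List.padNone_append_singleton, if_neg (by simp only [Set.mem_Icc] at hj; omega)]
  have hnew : (G fun j => (l ++ [a]).padNone (l.length - r + j)) ↔
      G fun j => snocWindow (2 * r) (lastWindow (2 * r) l) a (r + j) := by
    refine iff_of_eq (hG fun j hj => ?_)
    simp only [Set.mem_Icc] at hj
    rw [snocWindow_lastWindow _ _ _ (by omega)]
    congr 1
    push_cast
    ring
  simp only [GoodUpTo, ← hnew, List.length_append, List.length_singleton, Nat.cast_add,
    Nat.cast_one]
  constructor
  · exact fun h => ⟨fun i hi => (hold i hi).1 (h i (by omega)), h _ (by omega)⟩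
  · rintro ⟨h, hlast⟩ i hi
    rcases lt_or_eq_of_le (show i + r ≤ l.length by omega) with hlt | heq
    · exact (hold i hlt).2 (h i hlt)
    · convert hlast using 3
      omega

theorem eval_localDFA (hG : DependsOn G (Set.Icc (-(r : ℤ)) r)) (l : List α) :
    (localDFA G r).eval l = if GoodUpTo G r l then some (lastWindow (2 * r) l) else none := by
  induction l using List.reverseRecOn with
  | nil =>
    simp only [DFA.eval_nil, localDFA, goodUpTo_nil]
    congr
    funext k
    simp [lastWindow, List.padNone]
  | append_singleton l a ih =>
    rw [DFA.eval_append_singleton, ih, goodUpTo_append_singleton hG]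
    by_cases hl : GoodUpTo G r l
    · rw [if_pos hl, and_iff_right hl, lastWindow_append_singleton]
      rfl
    · simp [hl, localDFA]

theorem isRegular_ofLocalRule [Fintype α] (hG : DependsOn G (Set.Icc (-(r : ℤ)) r)) :
    (ofLocalRule G).IsRegular := by
  refine isRegular_iff.2 ⟨_, inferInstance, localDFA G r, ?_⟩
  ext l
  rw [DFA.mem_accepts, eval_localDFA hG]
  have htail : (∀ t : ℕ, G fun j => windowExt (2 * r) (lastWindow (2 * r) l) (r + t + j)) ↔
      ∀ i : ℤ, l.length ≤ i + r → G fun j => l.padNone (i + j) := by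
    have hshift : ∀ t : ℕ,
        ((G fun j => windowExt (2 * r) (lastWindow (2 * r) l) (r + t + j)) ↔
          G fun j => l.padNone (l.length - r + t + j)) := by
      refine fun t => iff_of_eq (hG fun j hj => ?_)
      simp only [Set.mem_Icc] at hj
      rw [windowExt_lastWindow _ _ (by omega)]
      congr 1
      push_cast
      ring
    simp only [hshift]
    refine ⟨fun h i hi => ?_, fun h t => h _ (by omega)⟩
    convert h (i + r - l.length).toNat using 3
    omega
  by_cases hl : GoodUpTo G r l
  · simp only [if_pos hl, localDFA, Set.mem_ofPred_eq, Option.some.injEq, exists_eq_left',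
      htail, ofLocalRule]
    exact ⟨fun h i => (lt_or_ge (i + r) l.length).elim (hl i) (h i), fun h i _ => h i⟩
  · simp only [if_neg hl, localDFA, Set.mem_ofPred_eq, reduceCtorEq, false_and, exists_false,
      false_iff, ofLocalRule]
    exact fun h => hl fun i _ => h i

end LocalDFA

end Language

theorem isRational_mk_card_of_local {α : Type*} [Fintype α] {G : (ℤ → Option α) → Prop}
    {r : ℕ} (hG : DependsOn G (Set.Icc (-(r : ℤ)) r))
    {P : ∀ n : ℕ, (Fin (n + 1) → α) → Prop}
    (hP : ∀ n C, P n C ↔ ∀ i : ℤ, G fun j => (List.ofFn C).padNone (i + j)) :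
    (PowerSeries.mk fun n => (Nat.card {C // P n C} : ℚ)).IsRational := by
  simp_rw [fun n => Nat.card_congr (Equiv.subtypeEquivRight (hP n))]
  exact PowerSeries.isRational_mk_succ (Language.isRegular_ofLocalRule hG).isRational_card

theorem dependsOn_of_imp {ι β : Type*} {P : (ι → β) → Prop} {S : Set ι}
    (h : ∀ ⦃c c' : ι → β⦄, (∀ i ∈ S, c i = c' i) → P c → P c') : DependsOn P S :=
  fun _ _ hc => propext ⟨h hc, h fun i hi => (hc i hi).symm⟩

theorem update_shift {β : Type*} (c : ℤ → β) (k : ℤ) (b : β) :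
    Function.update (fun j => c (k + j)) 0 b = fun j => Function.update c k b (k + j) := by
  funext j
  simp only [Function.update_apply, add_eq_left]

theorem maximal_iff_forall_update_insert {ι α : Type*} [DecidableEq ι] [DecidableEq α]
    {P : (ι → Finset α) → Prop}
    (hP : ∀ ⦃C C'⦄, P C' → (∀ i, C i ⊆ C' i) → (∀ i, (C i).Nonempty) → P C)
    (hne : ∀ ⦃C⦄, P C → ∀ i, (C i).Nonempty) {C : ι → Finset α} :
    (P C ∧ ∀ C', P C' → (∀ i, C i ⊆ C' i) → C' = C) ↔
      P C ∧ ∀ i x, x ∉ C i → ¬ P (Function.update C i (insert x (C i))) := by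
  refine and_congr_right fun hC => ⟨fun hmax i x hx hPx => hx ?_, fun hins C' hC' hle => ?_⟩
  · have hupd := hmax _ hPx fun j => by
      rcases eq_or_ne j i with rfl | hj
      · simp
      · simp [hj]
    simpa using congrFun hupd i
  · by_contra hne'
    obtain ⟨i, hi⟩ := Function.ne_iff.1 hne'
    obtain ⟨x, hxC', hxC⟩ := Finset.exists_of_ssubset ((hle i).ssubset_of_ne (Ne.symm hi))
    refine hins i x hxC (hP hC' (fun j => ?_) fun j => ?_)
    · rcases eq_or_ne j i with rfl | hj
      · simpa using Finset.insert_subset hxC' (hle j)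
      · simpa [hj] using hle j
    · rcases eq_or_ne j i with rfl | hj
      · simp
      · simpa [hj] using hne hC j

section Columns

variable {α : Type*}

-- Column sequences are indexed by `ℤ`, with `none` outside the sequence, so that translating a
-- sequence never needs truncated subtraction.
def Fits (v : List α) (c : ℤ → Option (Finset α)) (j : ℤ) : Prop :=
  ∀ m (hm : m < v.length), ∃ B, c (j + m) = some B ∧ v[m] ∈ B

def Admits (W : Finset (List α)) (c : ℤ → Option (Finset α)) : Prop :=
  ∀ v ∈ W, ∀ j, ¬ Fits v c j

def ColsLE (c c' : ℤ → Option (Finset α)) : Prop :=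
  ∀ k B, c k = some B → ∃ B', c' k = some B' ∧ B ⊆ B'

theorem fits_shift {v : List α} {c : ℤ → Option (Finset α)} {i j : ℤ} :
    Fits v (fun k => c (i + k)) j ↔ Fits v c (i + j) := by
  simp only [Fits, add_assoc]

theorem fits_congr {v : List α} {c c' : ℤ → Option (Finset α)} {j : ℤ}
    (h : ∀ m < v.length, c (j + m) = c' (j + m)) : Fits v c j ↔ Fits v c' j :=
  forall₂_congr fun m hm => by rw [h m hm]

theorem Fits.mono {v : List α} {c c' : ℤ → Option (Finset α)} {j : ℤ} (hc : ColsLE c c')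
    (h : Fits v c j) : Fits v c' j := fun m hm =>
  let ⟨B, hB, hv⟩ := h m hm
  let ⟨B', hB', hBB'⟩ := hc _ B hB
  ⟨B', hB', hBB' hv⟩

theorem Admits.anti {W : Finset (List α)} {c c' : ℤ → Option (Finset α)} (hc : ColsLE c c')
    (h : Admits W c') : Admits W c := fun v hv j hfit => h v hv j (hfit.mono hc)

theorem Admits.shift {W : Finset (List α)} {c : ℤ → Option (Finset α)} (h : Admits W c)
    (i : ℤ) : Admits W fun j => c (i + j) :=
  fun v hv _ hfit => h v hv _ (fits_shift.1 hfit)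

theorem exists_fits_of_infix {v : List α} {c : ℤ → Option (Finset α)} {i : ℤ} {len : ℕ}
    {f : Fin len → α} (hf : ∀ k : Fin len, ∃ B, c (i + k) = some B ∧ f k ∈ B)
    (hv : v <:+: List.ofFn f) : ∃ j, Fits v c j := by
  obtain ⟨j, hj⟩ := List.infix_iff_padNone.1 hv
  refine ⟨i + j, fun m hm => ?_⟩
  obtain ⟨k, hk, hfk⟩ := List.padNone_ofFn_eq_some.1 (hj m hm)
  obtain ⟨B, hB, hfB⟩ := hf k
  exact ⟨B, by rw [add_assoc, ← hk, hB], hfk ▸ hfB⟩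

theorem exists_infix_of_fits {n : ℕ} {C : Fin n → Finset α} (hne : ∀ i, (C i).Nonempty)
    {v : List α} {j : ℤ} (h : Fits v (List.ofFn C).padNone j) :
    ∃ f : Fin n → α, (∀ i, f i ∈ C i) ∧ v <:+: List.ofFn f := by
  refine ⟨fun k => if hk : 0 ≤ (k : ℤ) - j ∧ ((k : ℤ) - j).toNat < v.length
      then v[((k : ℤ) - j).toNat] else (hne k).choose,
    fun k => ?_, List.infix_iff_padNone.2 ⟨j, fun m hm => ?_⟩⟩
  · dsimp only
    split_ifs with hk
    · obtain ⟨B, hB, hvB⟩ := h _ hk.2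
      obtain ⟨k', hk', rfl⟩ := List.padNone_ofFn_eq_some.1 hB
      rwa [show k' = k from Fin.ext (by omega)] at hvB
    · exact (hne k).choose_spec
  · obtain ⟨B, hB, -⟩ := h m hm
    obtain ⟨k, hk, -⟩ := List.padNone_ofFn_eq_some.1 hB
    rw [← hk, List.padNone_ofFn_coe, dif_pos (by omega)]
    congr
    omega

end Columns

section Coherence

variable {α : Type*} [DecidableEq α]

def CoherentAt (W : Finset (List α)) (c : ℤ → Option (Finset α)) : Prop :=
  ∀ B, c 0 = some B → B.Nonempty ∧ ∀ v ∈ W, ¬ Fits v c 0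

def InsertBlocked (W : Finset (List α)) (d : ℕ) (c : ℤ → Option (Finset α)) (B : Finset α)
    (x : α) : Prop :=
  ∃ v ∈ W, ∃ j : ℤ, -(d : ℤ) < j ∧ j ≤ 0 ∧
    Fits v (Function.update c 0 (some (insert x B))) j

def MaxCoherentAt (W : Finset (List α)) (d : ℕ) (c : ℤ → Option (Finset α)) : Prop :=
  CoherentAt W c ∧ ∀ B, c 0 = some B → ∀ x ∉ B, InsertBlocked W d c B x

variable {s : ℕ} {W : Finset (List (Fin s))} {d n : ℕ}

theorem coherentSeq_iff_admits {C : Fin (n + 1) → Finset (Fin s)} :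
    CoherentSeq W C ↔ (∀ i, (C i).Nonempty) ∧ Admits W (List.ofFn C).padNone := by
  refine and_congr_right fun hne => ⟨fun hadm v hv j hfit => ?_, fun hadm f hf v hv hinf => ?_⟩
  · obtain ⟨f, hf, hinf⟩ := exists_infix_of_fits hne hfit
    exact hadm f hf v hv hinf
  · obtain ⟨j, hj⟩ := exists_fits_of_infix (c := (List.ofFn C).padNone) (i := 0)
      (fun k => ⟨C k, by rw [zero_add, List.padNone_ofFn_coe], hf k⟩) hinf
    exact hadm v hv j hj

theorem CoherentSeq.anti {C C' : Fin (n + 1) → Finset (Fin s)} (h : CoherentSeq W C')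
    (hle : ∀ i, C i ⊆ C' i) (hne : ∀ i, (C i).Nonempty) : CoherentSeq W C :=
  ⟨hne, fun f hf => h.2 f fun i => hle i (hf i)⟩

theorem coherentSeq_iff_forall_coherentAt {C : Fin (n + 1) → Finset (Fin s)} :
    CoherentSeq W C ↔ ∀ i : ℤ, CoherentAt W fun j => (List.ofFn C).padNone (i + j) := by
  simp only [CoherentAt, add_zero, fits_shift, List.forall_padNone_ofFn_eq_some,
    coherentSeq_iff_admits, forall_and]
  refine and_congr_right fun hne => ⟨fun hadm k v hv => hadm v hv k, fun h v hv j hfit => ?_⟩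
  rcases eq_or_ne v [] with rfl | hv'
  · exact h 0 [] hv fun m hm => absurd hm (by simp)
  obtain ⟨B, hB, -⟩ := hfit 0 (List.length_pos_iff.2 hv')
  obtain ⟨k, hk, -⟩ := List.padNone_ofFn_eq_some.1 hB
  simp only [Nat.cast_zero, add_zero] at hk
  exact h k v hv (hk ▸ hfit)

theorem not_coherentSeq_update_iff (hlen : ∀ v ∈ W, v.length ≤ d)
    {C : Fin (n + 1) → Finset (Fin s)} (hC : CoherentSeq W C) (k : Fin (n + 1)) (x : Fin s) :
    ¬ CoherentSeq W (Function.update C k (insert x (C k))) ↔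
      InsertBlocked W d (fun j => (List.ofFn C).padNone (k + j)) (C k) x := by
  obtain ⟨hne, hadm⟩ := coherentSeq_iff_admits.1 hC
  have hne' : ∀ i, (Function.update C k (insert x (C k)) i).Nonempty := fun i => by
    rcases eq_or_ne i k with rfl | hi
    · simp
    · simpa [hi] using hne i
  rw [coherentSeq_iff_admits, List.padNone_ofFn_update, InsertBlocked, update_shift]
  simp only [hne', implies_true, true_and, Admits, fits_shift, not_forall, not_not]
  constructor
  · rintro ⟨v, hv, j, hfit⟩
    -- as `C` is coherent, the fit has to use the enlarged column
    have hcover : j ≤ k ∧ (k : ℤ) < j + v.length := by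
      by_contra hout
      refine hadm v hv j ((fits_congr fun m hm => ?_).1 hfit)
      rw [Function.update_of_ne (by omega)]
    exact ⟨v, hv, j - k, by linarith [hlen v hv], by omega, by rwa [add_sub_cancel]⟩
  · rintro ⟨v, hv, j, -, -, hfit⟩
    exact ⟨v, hv, _, hfit⟩

theorem maxCoherent_iff_forall_maxCoherentAt (hlen : ∀ v ∈ W, v.length ≤ d)
    {C : Fin (n + 1) → Finset (Fin s)} :
    MaxCoherent W C ↔ ∀ i : ℤ, MaxCoherentAt W d fun j => (List.ofFn C).padNone (i + j) := by
  rw [MaxCoherent, maximal_iff_forall_update_insert (fun _ _ h => h.anti) fun _ h => h.1]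
  simp only [MaxCoherentAt, forall_and, ← coherentSeq_iff_forall_coherentAt, add_zero,
    List.forall_padNone_ofFn_eq_some]
  exact and_congr_right fun hC => forall_congr' fun k => forall_congr' fun x =>
    imp_congr_right fun _ => not_coherentSeq_update_iff hlen hC k x

theorem CoherentAt.of_eqOn (hlen : ∀ v ∈ W, v.length ≤ d)
    {c c' : ℤ → Option (Finset (Fin s))}
    (hc : ∀ i ∈ Set.Icc (-(d : ℤ)) d, c i = c' i) (h : CoherentAt W c) : CoherentAt W c' := by
  intro B hB
  obtain ⟨hBne, hfit⟩ := h B (hc 0 (by simp) ▸ hB)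
  refine ⟨hBne, fun v hv hv' => hfit v hv ((fits_congr fun m hm => ?_).2 hv')⟩
  have := hlen v hv
  exact hc _ ⟨by omega, by omega⟩

theorem InsertBlocked.of_eqOn (hlen : ∀ v ∈ W, v.length ≤ d)
    {c c' : ℤ → Option (Finset (Fin s))} (hc : ∀ i ∈ Set.Icc (-(d : ℤ)) d, c i = c' i)
    {B : Finset (Fin s)} {x : Fin s} (h : InsertBlocked W d c B x) : InsertBlocked W d c' B x := by
  obtain ⟨v, hv, j, hj, hj', hfit⟩ := h
  refine ⟨v, hv, j, hj, hj', (fits_congr fun m hm => ?_).1 hfit⟩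
  have := hlen v hv
  simp only [Function.update_apply]
  split_ifs
  · rfl
  · exact hc _ ⟨by omega, by omega⟩

theorem dependsOn_maxCoherentAt (hlen : ∀ v ∈ W, v.length ≤ d) :
    DependsOn (MaxCoherentAt W d) (Set.Icc (-(d : ℤ)) d) :=
  dependsOn_of_imp fun c c' hc h => ⟨h.1.of_eqOn hlen hc, fun B hB x hx =>
    (h.2 B (hc 0 (by simp) ▸ hB) x hx).of_eqOn hlen hc⟩

end Coherence

section Prolongable

variable {α : Type*}

def natCols (D : ℕ → Finset α) (j : ℤ) : Option (Finset α) :=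
  if 0 ≤ j then some (D j.toNat) else none

def tailGlue (d : ℕ) (c : ℤ → Option (Finset α)) (D : ℤ → Finset α) (j : ℤ) :
    Option (Finset α) :=
  if 0 < j then some (D j) else if -(d : ℤ) < j then c j else none

def TailExtendable (W : Finset (List α)) (d : ℕ) (c : ℤ → Option (Finset α)) : Prop :=
  ∃ D : ℤ → Finset α, (∀ j, 0 < j → (D j).Nonempty) ∧ Admits W (tailGlue d c D)

theorem TailExtendable.anti {W : Finset (List α)} {d : ℕ} {c c' : ℤ → Option (Finset α)}
    (hc : ColsLE c c') (h : TailExtendable W d c') : TailExtendable W d c := by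
  obtain ⟨D, hne, hadm⟩ := h
  refine ⟨D, hne, hadm.anti fun k B hB => ?_⟩
  unfold tailGlue at hB ⊢
  split_ifs at hB ⊢ with h1 h2
  · exact ⟨B, hB, subset_rfl⟩
  · exact hc k B hB

theorem tailExtendable_congr {W : Finset (List α)} {d : ℕ} {c c' : ℤ → Option (Finset α)}
    (hc : ∀ j, -(d : ℤ) < j → j ≤ 0 → c j = c' j) :
    TailExtendable W d c ↔ TailExtendable W d c' := by
  have hglue : ∀ D, tailGlue d c D = tailGlue d c' D := fun D => by
    funext j
    unfold tailGlue
    split_ifs with h1 h2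
    · rfl
    · exact hc j h2 (by omega)
    · rfl
  simp only [TailExtendable, hglue]

variable {s : ℕ} {W : Finset (List (Fin s))} {d n : ℕ}

theorem prolongableSeq_iff_admits {C : Fin (n + 1) → Finset (Fin s)} :
    ProlongableSeq W C ↔ ∃ D : ℕ → Finset (Fin s), (∀ i, (D i).Nonempty) ∧
      (∀ i : Fin (n + 1), D i = C i) ∧ Admits W (natCols D) := by
  refine exists_congr fun D => and_congr_right fun _ => and_congr_right fun _ =>
    ⟨fun hseg v hv j hfit => ?_, fun hadm i len f hf v hv hinf => ?_⟩
  · rcases eq_or_ne v [] with rfl | hv'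
    · exact hseg 0 0 Fin.elim0 (fun k => k.elim0) [] hv (by simp)
    obtain ⟨B, hB, -⟩ := hfit 0 (List.length_pos_iff.2 hv')
    have hj : 0 ≤ j := by
      by_contra hj
      simp [natCols, hj] at hB
    refine hseg j.toNat v.length (fun k => v[(k : ℕ)]) (fun k => ?_) v hv
      (by rw [List.ofFn_getElem])
    obtain ⟨B, hB, hvB⟩ := hfit k k.2
    rw [natCols, if_pos (by omega), Option.some_inj] at hB
    rwa [show j.toNat + (k : ℕ) = (j + k).toNat by omega, hB]
  · obtain ⟨j, hj⟩ := exists_fits_of_infix (c := natCols D) (i := i)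
      (fun k => ⟨D (i + k), by rw [natCols, if_pos (by positivity)]; congr, hf k⟩) hinf
    exact hadm v hv j hj

theorem ProlongableSeq.coherentSeq_and_tailExtendable {C : Fin (n + 1) → Finset (Fin s)}
    (h : ProlongableSeq W C) :
    CoherentSeq W C ∧ TailExtendable W d fun j => (List.ofFn C).padNone (n + j) := by
  obtain ⟨D, hne, hDC, hadm⟩ := prolongableSeq_iff_admits.1 h
  have hle : ColsLE (List.ofFn C).padNone (natCols D) := fun k B hB => by
    obtain ⟨k, rfl, rfl⟩ := List.padNone_ofFn_eq_some.1 hB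
    exact ⟨C k, by simp [natCols, ← hDC k], subset_rfl⟩
  refine ⟨coherentSeq_iff_admits.2 ⟨fun i => hDC i ▸ hne i, hadm.anti hle⟩,
    fun j => D (n + j).toNat, fun j _ => hne _, (hadm.shift n).anti fun k B hB => ?_⟩
  unfold tailGlue at hB
  split_ifs at hB with h1 h2
  · exact ⟨B, by simpa [natCols, show 0 ≤ (n : ℤ) + k by omega] using hB, subset_rfl⟩
  · exact hle _ B hB

-- A forbidden word reaching beyond the last column starts less than `d` columns before it, so
-- it is spelt inside the tail glued to the continuation.
theorem CoherentSeq.prolongableSeq (hlen : ∀ v ∈ W, v.length ≤ d)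
    {C : Fin (n + 1) → Finset (Fin s)} (hC : CoherentSeq W C)
    (htail : TailExtendable W d fun j => (List.ofFn C).padNone (n + j)) :
    ProlongableSeq W C := by
  obtain ⟨hne, hadm⟩ := coherentSeq_iff_admits.1 hC
  obtain ⟨D', hne', hadm'⟩ := htail
  set D : ℕ → Finset (Fin s) := fun k => if h : k < n + 1 then C ⟨k, h⟩ else D' (k - n)
  have hcols : ∀ q : ℤ, 0 ≤ q → q ≤ n → natCols D q = (List.ofFn C).padNone q := by
    intro q h0 hq
    have hlt : q.toNat < n + 1 := by omega
    rw [natCols, if_pos h0,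
      List.padNone_ofFn_eq_some.2 ⟨⟨q.toNat, hlt⟩, Int.toNat_of_nonneg h0, rfl⟩]
    simp only [D, dif_pos hlt]
  refine prolongableSeq_iff_admits.2 ⟨D, fun k => ?_, fun k => by simp only [D, dif_pos k.isLt],
    fun v hv j hfit => ?_⟩
  · by_cases h : k < n + 1
    · simp only [D, dif_pos h]
      exact hne _
    · simp only [D, dif_neg h]
      exact hne' _ (by omega)
  rcases eq_or_ne v [] with rfl | hv'
  · exact hadm [] hv 0 fun m hm => absurd hm (by simp)
  have hj : 0 ≤ j := by
    obtain ⟨B, hB, -⟩ := hfit 0 (List.length_pos_iff.2 hv')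
    by_contra hj
    simp [natCols, hj] at hB
  have hvd := hlen v hv
  by_cases hcase : j + v.length ≤ n + 1
  · exact hadm v hv j ((fits_congr fun m hm => hcols _ (by omega) (by omega)).1 hfit)
  refine hadm' v hv (j - n) ((fits_congr fun m hm => ?_).1
    (fits_shift.2 (by rwa [add_sub_cancel])))
  unfold tailGlue
  split_ifs with h1 h2
  · simp only [natCols, if_pos (show 0 ≤ (n : ℤ) + (j - n + m) by omega), D,
      dif_neg (show ¬((n : ℤ) + (j - n + m)).toNat < n + 1 by omega)]
    congr
    omega
  · exact hcols _ (by omega) (by omega)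
  · omega

theorem prolongableSeq_iff (hlen : ∀ v ∈ W, v.length ≤ d)
    {C : Fin (n + 1) → Finset (Fin s)} :
    ProlongableSeq W C ↔
      CoherentSeq W C ∧ TailExtendable W d fun j => (List.ofFn C).padNone (n + j) :=
  ⟨ProlongableSeq.coherentSeq_and_tailExtendable, fun h => h.1.prolongableSeq hlen h.2⟩

end Prolongable

section MaxProlongable

variable {α : Type*} [DecidableEq α]

-- `e` is the distance from position `0` to the last column of the sequence.
def TailBlocked (W : Finset (List α)) (d : ℕ) (c : ℤ → Option (Finset α)) (B : Finset α)
    (x : α) : Prop :=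
  ∃ e : ℕ, e < d ∧ c e ≠ none ∧ c (e + 1) = none ∧
    ¬ TailExtendable W d fun j => Function.update c 0 (some (insert x B)) (e + j)

def MaxProlongableAt (W : Finset (List α)) (d : ℕ) (c : ℤ → Option (Finset α)) : Prop :=
  CoherentAt W c ∧ (c 0 ≠ none → c 1 = none → TailExtendable W d c) ∧
    ∀ B, c 0 = some B → ∀ x ∉ B, InsertBlocked W d c B x ∨ TailBlocked W d c B x

variable {s : ℕ} {W : Finset (List (Fin s))} {d n : ℕ}

theorem ProlongableSeq.nonempty {C : Fin (n + 1) → Finset (Fin s)} (h : ProlongableSeq W C) :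
    ∀ i, (C i).Nonempty :=
  let ⟨_, hne, hDC, _⟩ := h
  fun i => hDC i ▸ hne i

theorem ProlongableSeq.anti (hlen : ∀ v ∈ W, v.length ≤ d)
    {C C' : Fin (n + 1) → Finset (Fin s)}
    (h : ProlongableSeq W C') (hle : ∀ i, C i ⊆ C' i) (hne : ∀ i, (C i).Nonempty) :
    ProlongableSeq W C := by
  rw [prolongableSeq_iff hlen] at h ⊢
  refine ⟨h.1.anti hle hne, h.2.anti fun k B hB => ?_⟩
  obtain ⟨i, hi, rfl⟩ := List.padNone_ofFn_eq_some.1 hB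
  exact ⟨C' i, by rw [← hi, List.padNone_ofFn_coe], hle i⟩

theorem not_prolongableSeq_update_iff (hlen : ∀ v ∈ W, v.length ≤ d)
    {C : Fin (n + 1) → Finset (Fin s)} (hP : ProlongableSeq W C) (k : Fin (n + 1)) (x : Fin s) :
    ¬ ProlongableSeq W (Function.update C k (insert x (C k))) ↔
      InsertBlocked W d (fun j => (List.ofFn C).padNone (k + j)) (C k) x ∨
        TailBlocked W d (fun j => (List.ofFn C).padNone (k + j)) (C k) x := by
  obtain ⟨hC, htail⟩ := (prolongableSeq_iff hlen).1 hP
  rw [prolongableSeq_iff hlen, not_and_or, not_coherentSeq_update_iff hlen hC,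
    List.padNone_ofFn_update]
  refine or_congr_right ?_
  simp only [TailBlocked, update_shift]
  constructor
  · intro hnot
    have hkn : (k : ℤ) + (n - k : ℕ) = n := by omega
    refine ⟨n - k, ?_, by simpa [hkn] using List.padNone_ofFn_last_ne_none C,
      List.padNone_eq_none_of_length_le (by simp only [List.length_ofFn]; omega), ?_⟩
    · -- otherwise the enlarged column lies outside the tail, which is then unchanged
      by_contra hge
      refine hnot ((tailExtendable_congr fun j hj _ => ?_).2 htail)
      exact Function.update_of_ne (by omega) _ _
    · convert hnot using 4
      omega
  · rintro ⟨e, -, h1, h2, hnot⟩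
    have hke : (k : ℤ) + e = n :=
      List.padNone_ofFn_ne_none_and_succ_eq_none_iff.1 ⟨h1, by rwa [← add_assoc] at h2⟩
    convert hnot using 4
    omega

theorem forall_tailExtendable_iff {C : Fin (n + 1) → Finset (Fin s)} :
    (∀ i : ℤ, (List.ofFn C).padNone i ≠ none → (List.ofFn C).padNone (i + 1) = none →
        TailExtendable W d fun j => (List.ofFn C).padNone (i + j)) ↔
      TailExtendable W d fun j => (List.ofFn C).padNone (n + j) :=
  ⟨fun h => h n (List.padNone_ofFn_last_ne_none C)
      (List.padNone_eq_none_of_length_le (by simp)),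
    fun h i h1 h2 => List.padNone_ofFn_ne_none_and_succ_eq_none_iff.1 ⟨h1, h2⟩ ▸ h⟩

theorem maxProlongable_iff_forall_maxProlongableAt (hlen : ∀ v ∈ W, v.length ≤ d)
    {C : Fin (n + 1) → Finset (Fin s)} :
    MaxProlongable W C ↔
      ∀ i : ℤ, MaxProlongableAt W d fun j => (List.ofFn C).padNone (i + j) := by
  rw [MaxProlongable, maximal_iff_forall_update_insert (fun _ _ h => h.anti hlen)
    fun _ h => h.nonempty]
  simp only [MaxProlongableAt, forall_and, ← coherentSeq_iff_forall_coherentAt, add_zero,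
    List.forall_padNone_ofFn_eq_some, forall_tailExtendable_iff]
  constructor
  · rintro ⟨hP, hmax⟩
    obtain ⟨hC, htail⟩ := (prolongableSeq_iff hlen).1 hP
    exact ⟨hC, htail, fun k x hx => (not_prolongableSeq_update_iff hlen hP k x).1 (hmax k x hx)⟩
  · rintro ⟨hC, htail, hblock⟩
    have hP := (prolongableSeq_iff hlen).2 ⟨hC, htail⟩
    exact ⟨hP, fun k x hx => (not_prolongableSeq_update_iff hlen hP k x).2 (hblock k x hx)⟩

theorem TailBlocked.of_eqOn {c c' : ℤ → Option (Finset (Fin s))}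
    (hc : ∀ i ∈ Set.Icc (-(d : ℤ)) d, c i = c' i) {B : Finset (Fin s)} {x : Fin s}
    (h : TailBlocked W d c B x) : TailBlocked W d c' B x := by
  obtain ⟨e, he, h1, h2, hnot⟩ := h
  refine ⟨e, he, hc e ⟨by omega, by omega⟩ ▸ h1, hc (e + 1) ⟨by omega, by omega⟩ ▸ h2,
    fun hext => hnot ((tailExtendable_congr fun j hj hj' => ?_).2 hext)⟩
  simp only [Function.update_apply]
  split_ifs
  · rfl
  · exact hc _ ⟨by omega, by omega⟩

theorem dependsOn_maxProlongableAt (hlen : ∀ v ∈ W, v.length ≤ d) :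
    DependsOn (MaxProlongableAt W d) (Set.Icc (-((d + 1 : ℕ) : ℤ)) ((d + 1 : ℕ) : ℤ)) := by
  refine dependsOn_of_imp fun c c' hc' ⟨hcoh, htail, hblock⟩ => ?_
  have hc : ∀ i ∈ Set.Icc (-(d : ℤ)) d, c i = c' i := fun i hi => hc' i ⟨by
    push_cast; linarith [hi.1], by push_cast; linarith [hi.2]⟩
  refine ⟨hcoh.of_eqOn hlen hc, fun h0 h1 => ?_, fun B hB x hx => ?_⟩
  · refine (tailExtendable_congr fun j hj hj' => hc j ⟨by omega, by omega⟩).1 (htail ?_ ?_)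
    · rwa [hc 0 (by simp)]
    · rwa [hc' 1 ⟨by omega, by omega⟩]
  · exact (hblock B (hc 0 (by simp) ▸ hB) x hx).imp (·.of_eqOn hlen hc) (·.of_eqOn hc)

end MaxProlongable

theorem statement16_general (s d : ℕ) (W : Finset (List (Fin s)))
    (hlen : ∀ u ∈ W, u.length ≤ d) :
    (∃ p q : Polynomial ℚ, q ≠ 0 ∧
        (PowerSeries.mk fun n : ℕ =>
            ((Nat.card { C : Fin (n + 1) → Finset (Fin s) // MaxCoherent W C } : ℚ))) *
          (q : PowerSeries ℚ) = (p : PowerSeries ℚ)) ∧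
      (∃ p q : Polynomial ℚ, q ≠ 0 ∧
        (PowerSeries.mk fun n : ℕ =>
            ((Nat.card { C : Fin (n + 1) → Finset (Fin s) // MaxProlongable W C } : ℚ))) *
          (q : PowerSeries ℚ) = (p : PowerSeries ℚ)) :=
  ⟨isRational_mk_card_of_local (dependsOn_maxCoherentAt hlen) fun _ _ =>
      maxCoherent_iff_forall_maxCoherentAt hlen,
    isRational_mk_card_of_local (dependsOn_maxProlongableAt hlen) fun _ _ =>
      maxProlongable_iff_forall_maxProlongableAt hlen⟩

/-- Fix a finite alphabet, `d ≥ 2` and a finite set `W` of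
forbidden words of length at most `d`.  Let `ā_n` (resp. `a_n`) be the number of
maximal coherent (resp. maximal prolongable) sequences `(C_0,…,C_n)`.  Then the
generating functions `∑ ā_n tⁿ` and `∑ a_n tⁿ` are rational functions. -/
theorem statement16 (s d : ℕ) (hd : 2 ≤ d) (W : Finset (List (Fin s)))
    (hlen : ∀ u ∈ W, u.length ≤ d) :
    (∃ p q : Polynomial ℚ, q ≠ 0 ∧
        (PowerSeries.mk fun n : ℕ =>
            ((Nat.card { C : Fin (n + 1) → Finset (Fin s) // MaxCoherent W C } : ℚ))) *
          (q : PowerSeries ℚ) = (p : PowerSeries ℚ)) ∧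
      (∃ p q : Polynomial ℚ, q ≠ 0 ∧
        (PowerSeries.mk fun n : ℕ =>
            ((Nat.card { C : Fin (n + 1) → Finset (Fin s) // MaxProlongable W C } : ℚ))) *
          (q : PowerSeries ℚ) = (p : PowerSeries ℚ)) :=
  statement16_general s d W hlen
end
end

section
/- Let A be a prolongable monomial algebra on alphabet Σ = {x_1, …, x_m} over a field F, and suppose that for every n ∈ ℕ there exists a tree (C_i)_{i≥0} over A that is n-maximal, i.e., every tree (C'_i)_{i≥0} over A satisfies C'_i ⊆ C_i for all 0 ≤ i ≤ n. Then there exists a subset S ⊆ Σ such that the two-sided ideal N of A generated by S is nilpotent and A/N is isomorphic to the free algebra F⟨Σ∖S⟩ on the remaining generators. -/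
/-!
Let `C` be the tree which is maximal at every position; it exists because `n`-maximal trees
agree with each other below `n`. Shifting a tree gives a tree, so `C` is antitone, hence
eventually constant, equal to some `T ⊆ Σ` from position `n₀` on. By prolongability every
nonzero monomial `u` is a prefix of an infinite word all of whose factors are nonzero, i.e. of a
tree of singletons, so the `k`-th letter of `u` lies in `C k`. Put `S = Σ ∖ T`. Then a nonzero
monomial contains at most `n₀` letters of `S`, which makes the ideal generated by `S` nilpotent.
Conversely a word avoiding `S` selects from `C` at position `n₀`, so it is a nonzero monomial:
every forbidden word contains a letter of `S`, and killing `S` leaves the free algebra on `T`.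
-/

noncomputable section

open scoped BigOperators

/-- The free associative `F`-algebra on `m` generators, realized as the monoid
algebra of the free monoid on `Fin m`. -/
abbrev FreeAlg (F : Type) [Field F] (m : ℕ) : Type :=
  MonoidAlgebra F (FreeMonoid (Fin m))

variable (F : Type) [Field F] {m : ℕ}

/-- The element of the free algebra corresponding to a word `u`. -/
def wordElem (u : List (Fin m)) : FreeAlg F m :=
  MonoidAlgebra.of F (FreeMonoid (Fin m)) (FreeMonoid.ofList u)

/-- The relation identifying the forbidden words in `W` with `0`. -/
def monRel (W : Set (List (Fin m))) : FreeAlg F m → FreeAlg F m → Prop :=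
  fun a b => (∃ u ∈ W, a = wordElem F u) ∧ b = 0

/-- The monomial algebra `F⟨x_1,…,x_m⟩/⟨W⟩` determined by the set `W` of forbidden
words. -/
abbrev MonAlg (W : Set (List (Fin m))) : Type :=
  RingQuot (monRel F W)

/-- The canonical projection from the free algebra onto the monomial algebra. -/
def monAlgPi (W : Set (List (Fin m))) : FreeAlg F m →ₐ[F] MonAlg F W :=
  RingQuot.mkAlgHom F (monRel F W)

/-- The image of the word `u` in the monomial algebra; `u` is a *nonzero monomial*
of the monomial algebra iff `mono F W u ≠ 0`. -/
def mono (W : Set (List (Fin m))) (u : List (Fin m)) : MonAlg F W :=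
  monAlgPi F W (wordElem F u)

/-- The degree-`d` homogeneous component of the monomial algebra, spanned by the
images of the words of length `d`. -/
def homog (W : Set (List (Fin m))) (d : ℕ) : Submodule F (MonAlg F W) :=
  Submodule.span F { a | ∃ u : List (Fin m), u.length = d ∧ a = mono F W u }
/-- The right prolongable radical of a graded algebra `A` with grading `𝒜`:
the set of `f ∈ A` with `f · A_d = 0` for some `d ≥ 1`. -/
def proSet (A : Type) [Ring A] [Algebra F A] (𝒜 : ℕ → Submodule F A) : Set A :=
  { f | ∃ d : ℕ, 1 ≤ d ∧ ∀ g ∈ 𝒜 d, f * g = 0 }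

/-- The left prolongable radical of a graded algebra `A` with grading `𝒜`:
the set of `f ∈ A` with `A_d · f = 0` for some `d ≥ 1`. -/
def proSetLeft (A : Type) [Ring A] [Algebra F A] (𝒜 : ℕ → Submodule F A) : Set A :=
  { f | ∃ d : ℕ, 1 ≤ d ∧ ∀ g ∈ 𝒜 d, g * f = 0 }

/-- A monomial algebra is (right) prolongable if every nonzero monomial has a
nonzero proper right prolongation. -/
def Prolongable (W : Set (List (Fin m))) : Prop :=
  ∀ u : List (Fin m), mono F W u ≠ 0 → ∃ v : List (Fin m), v ≠ [] ∧ mono F W (u ++ v) ≠ 0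
/-- The word `u`, read starting at position `i`, selects its letters from the
sequence of sets `C`. -/
def SelectsFrom (C : ℕ → Set (Fin m)) (i : ℕ) (u : List (Fin m)) : Prop :=
  ∀ (k : ℕ) (h : k < u.length), u.get ⟨k, h⟩ ∈ C (i + k)

/-- A tree over the monomial algebra with forbidden words `W`: a sequence of
nonempty subsets of the alphabet all of whose "segment words" are nonzero
monomials of the algebra. -/
def IsTree (W : Set (List (Fin m))) (C : ℕ → Set (Fin m)) : Prop :=
  (∀ i, (C i).Nonempty) ∧
    ∀ (i : ℕ) (u : List (Fin m)), SelectsFrom C i u → mono F W u ≠ 0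

section Monomials

variable {W : Set (List (Fin m))}

theorem wordElem_append (u v : List (Fin m)) :
    wordElem F (u ++ v) = wordElem F u * wordElem F v := by
  rw [wordElem, wordElem, wordElem, ← map_mul]
  rfl

theorem mono_append (u v : List (Fin m)) : mono F W (u ++ v) = mono F W u * mono F W v := by
  rw [mono, wordElem_append, map_mul, mono, mono]

theorem mono_of_mem {w : List (Fin m)} (hw : w ∈ W) : mono F W w = 0 :=
  RingQuot.mkAlgHom_rel F (s := monRel F W) ⟨⟨w, hw, rfl⟩, rfl⟩ |>.trans (map_zero _)

theorem mono_eq_zero_of_isInfix {u w : List (Fin m)} (huw : u <:+: w) (hu : mono F W u = 0) :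
    mono F W w = 0 := by
  obtain ⟨s, t, rfl⟩ := huw
  rw [mono_append, mono_append, hu, mul_zero, zero_mul]

theorem span_mono_eq_top : Submodule.span F {a | ∃ u : List (Fin m), a = mono F W u} = ⊤ := by
  rw [Submodule.eq_top_iff']
  intro x
  obtain ⟨y, rfl⟩ := RingQuot.mkAlgHom_surjective F (monRel F W) x
  induction y using MonoidAlgebra.induction_on with
  | of g => exact Submodule.subset_span ⟨g.toList, rfl⟩
  | add f g hf hg => rw [map_add]; exact Submodule.add_mem _ hf hg
  | smul r f hf => rw [map_smul]; exact Submodule.smul_mem _ _ hf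

end Monomials

section Trees

variable {F} {W : Set (List (Fin m))}

theorem IsTree.shift {C : ℕ → Set (Fin m)} (hC : IsTree F W C) (d : ℕ) :
    IsTree F W (fun i => C (i + d)) := by
  refine ⟨fun i => hC.1 (i + d), fun i u hu => hC.2 (i + d) u fun k hk => ?_⟩
  rw [Nat.add_right_comm]
  exact hu k hk

variable (F W) in
def IsNMaximalTree (n : ℕ) (C : ℕ → Set (Fin m)) : Prop :=
  IsTree F W C ∧ ∀ C' : ℕ → Set (Fin m), IsTree F W C' → ∀ i ≤ n, C' i ⊆ C i

variable (hmax : ∀ n, ∃ C, IsNMaximalTree F W n C)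

def maxTree (i : ℕ) : Set (Fin m) := (hmax i).choose i

theorem subset_maxTree {C : ℕ → Set (Fin m)} (hC : IsTree F W C) (i : ℕ) :
    C i ⊆ maxTree hmax i :=
  (hmax i).choose_spec.2 C hC i le_rfl

theorem IsNMaximalTree.eq_maxTree {n : ℕ} {C : ℕ → Set (Fin m)} (hC : IsNMaximalTree F W n C)
    {i : ℕ} (hi : i ≤ n) : C i = maxTree hmax i :=
  (subset_maxTree hmax hC.1 i).antisymm (hC.2 _ (hmax i).choose_spec.1 i hi)

theorem isTree_maxTree : IsTree F W (maxTree hmax) := by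
  refine ⟨fun i => (hmax i).choose_spec.1.1 i, fun i u hu => ?_⟩
  have hC := (hmax (i + u.length)).choose_spec
  refine hC.1.2 i u fun k hk => ?_
  rw [hC.eq_maxTree hmax (by omega)]
  exact hu k hk

theorem maxTree_antitone : Antitone (maxTree hmax) :=
  antitone_nat_of_succ_le fun i => subset_maxTree hmax ((isTree_maxTree hmax).shift 1) i

theorem maxTree_eventually_const :
    ∃ n₀, ∀ i, n₀ ≤ i → maxTree hmax i = maxTree hmax n₀ := by
  obtain ⟨n₀, hn₀⟩ := WellFoundedLT.antitone_chain_condition (maxTree_antitone hmax)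
  exact ⟨n₀, fun i hi => (hn₀ i hi).symm⟩

theorem mono_ne_zero_of_forall_mem_maxTree {n₀ : ℕ}
    (hn₀ : ∀ i, n₀ ≤ i → maxTree hmax i = maxTree hmax n₀) {u : List (Fin m)}
    (hu : ∀ j ∈ u, j ∈ maxTree hmax n₀) : mono F W u ≠ 0 :=
  (isTree_maxTree hmax).2 n₀ u fun k hk => hn₀ (n₀ + k) (by omega) ▸ hu _ (List.get_mem u _)

end Trees

section Prolongation

variable {F} {W : Set (List (Fin m))} (hpro : Prolongable F W)

def prolong (u : {u : List (Fin m) // mono F W u ≠ 0}) : {u : List (Fin m) // mono F W u ≠ 0} :=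
  ⟨u.1 ++ (hpro u.1 u.2).choose, (hpro u.1 u.2).choose_spec.2⟩

variable (u : {u : List (Fin m) // mono F W u ≠ 0})

def prolongSeq (n : ℕ) : {u : List (Fin m) // mono F W u ≠ 0} := (prolong hpro)^[n] u

theorem prolongSeq_succ (n : ℕ) :
    prolongSeq hpro u (n + 1) = prolong hpro (prolongSeq hpro u n) :=
  Function.iterate_succ_apply' _ _ _

theorem prolongSeq_isPrefix {i j : ℕ} (hij : i ≤ j) :
    (prolongSeq hpro u i).1 <+: (prolongSeq hpro u j).1 := by
  induction j, hij using Nat.le_induction with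
  | base => exact List.prefix_rfl
  | succ j _ ih => rw [prolongSeq_succ]; exact ih.trans (List.prefix_append _ _)

theorem le_length_prolongSeq (n : ℕ) : n ≤ (prolongSeq hpro u n).1.length := by
  induction n with
  | zero => exact Nat.zero_le _
  | succ n ih =>
    have hv := List.length_pos_iff.mpr (hpro _ (prolongSeq hpro u n).2).choose_spec.1
    rw [prolongSeq_succ, prolong, List.length_append]
    omega

def limitWord (i : ℕ) : Fin m :=
  (prolongSeq hpro u (i + 1)).1[i]'(le_length_prolongSeq hpro u (i + 1))

theorem getElem_prolongSeq {n i : ℕ} (hi : i < (prolongSeq hpro u n).1.length) :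
    (prolongSeq hpro u n).1[i] = limitWord hpro u i :=
  ((prolongSeq_isPrefix hpro u (le_max_left n (i + 1))).getElem hi).trans
    ((prolongSeq_isPrefix hpro u (le_max_right n (i + 1))).getElem _).symm

theorem isTree_limitWord : IsTree F W (fun i => {limitWord hpro u i}) := by
  refine ⟨fun i => Set.singleton_nonempty _, fun i v hv => ?_⟩
  set L := (prolongSeq hpro u (i + v.length)).1
  have hL : i + v.length ≤ L.length := le_length_prolongSeq hpro u _
  have hvL : v = (L.drop i).take v.length := by
    refine List.ext_getElem (by simp only [List.length_take, List.length_drop]; omega) ?_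
    intro k hk _
    rw [List.getElem_take, List.getElem_drop, getElem_prolongSeq]
    exact hv k hk
  have hinfix : v <:+: L :=
    hvL ▸ (List.take_prefix _ _).isInfix.trans (List.drop_suffix _ _).isInfix
  exact fun h => (prolongSeq hpro u _).2 (mono_eq_zero_of_isInfix F hinfix h)

end Prolongation

variable {F} in
theorem getElem_mem_maxTree {W : Set (List (Fin m))} (hpro : Prolongable F W)
    (hmax : ∀ n, ∃ C, IsNMaximalTree F W n C) {u : List (Fin m)}
    (hu : mono F W u ≠ 0) {k : ℕ} (hk : k < u.length) : u[k] ∈ maxTree hmax k :=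
  subset_maxTree hmax (isTree_limitWord hpro ⟨u, hu⟩) k
    (getElem_prolongSeq hpro ⟨u, hu⟩ (n := 0) hk)

section Nilpotent

variable {W : Set (List (Fin m))} (S : Set (Fin m)) [DecidablePred (· ∈ S)]

theorem countP_le_of_getElem_notMem {u : List (Fin m)} {n : ℕ}
    (hu : ∀ (k : ℕ) (hk : k < u.length), n ≤ k → u[k] ∉ S) :
    u.countP (· ∈ S) ≤ n := by
  have hdrop : (u.drop n).countP (· ∈ S) = 0 := by
    refine List.countP_eq_zero.mpr fun a ha => ?_
    obtain ⟨k, hk, rfl⟩ := List.getElem_of_mem ha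
    rw [List.getElem_drop]
    simpa using hu (n + k) (by rw [List.length_drop] at hk; omega) (by omega)
  calc u.countP (· ∈ S) = (u.take n).countP (· ∈ S) + (u.drop n).countP (· ∈ S) := by
        rw [← List.countP_append, List.take_append_drop]
    _ ≤ n := by
        rw [hdrop, add_zero]
        exact (List.countP_le_length).trans (List.length_take_le _ _)

def spanMonoCountGe (r : ℕ) : Submodule F (MonAlg F W) :=
  Submodule.span F {a | ∃ u : List (Fin m), r ≤ u.countP (· ∈ S) ∧ a = mono F W u}

theorem mem_spanMonoCountGe_zero (x : MonAlg F W) : x ∈ spanMonoCountGe F S 0 := by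
  have hx : x ∈ Submodule.span F {a | ∃ u : List (Fin m), a = mono F W u} :=
    span_mono_eq_top F ▸ Submodule.mem_top
  refine Submodule.span_mono ?_ hx
  rintro _ ⟨u, rfl⟩
  exact ⟨u, Nat.zero_le _, rfl⟩

theorem mul_mem_spanMonoCountGe {r s : ℕ} {x y : MonAlg F W}
    (hx : x ∈ spanMonoCountGe F S r) (hy : y ∈ spanMonoCountGe F S s) :
    x * y ∈ spanMonoCountGe F S (r + s) := by
  induction hx using Submodule.span_induction with
  | mem x hx =>
    obtain ⟨u, hu, rfl⟩ := hx
    induction hy using Submodule.span_induction with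
    | mem y hy =>
      obtain ⟨v, hv, rfl⟩ := hy
      refine Submodule.subset_span ⟨u ++ v, ?_, (mono_append F u v).symm⟩
      rw [List.countP_append]
      omega
    | zero => rw [mul_zero]; exact Submodule.zero_mem _
    | add y z _ _ hy hz => rw [mul_add]; exact Submodule.add_mem _ hy hz
    | smul c y _ hy => rw [mul_smul_comm]; exact Submodule.smul_mem _ _ hy
  | zero => rw [zero_mul]; exact Submodule.zero_mem _
  | add x z _ _ hx hz => rw [add_mul]; exact Submodule.add_mem _ hx hz
  | smul c x _ hx => rw [smul_mul_assoc]; exact Submodule.smul_mem _ _ hx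

theorem list_prod_mem_spanMonoCountGe {k : ℕ} (f : Fin k → MonAlg F W)
    (hf : ∀ t, f t ∈ spanMonoCountGe F S 1) :
    (List.ofFn f).prod ∈ spanMonoCountGe F S k := by
  induction k with
  | zero => exact mem_spanMonoCountGe_zero F S _
  | succ k ih =>
    have h := mul_mem_spanMonoCountGe F S (hf 0) (ih _ fun t => hf t.succ)
    rwa [Nat.add_comm 1 k, ← List.prod_cons, ← List.ofFn_succ] at h

theorem spanMonoCountGe_succ_eq_bot {n : ℕ}
    (hW : ∀ u : List (Fin m), mono F W u ≠ 0 → u.countP (· ∈ S) ≤ n) :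
    spanMonoCountGe F (W := W) S (n + 1) = ⊥ := by
  refine eq_bot_iff.mpr <| Submodule.span_le.mpr ?_
  rintro _ ⟨u, hu, rfl⟩
  by_contra h
  have := hW u h
  omega

theorem list_prod_letters_eq_zero {n : ℕ}
    (hW : ∀ u : List (Fin m), mono F W u ≠ 0 → u.countP (· ∈ S) ≤ n)
    (a b : Fin (n + 1) → MonAlg F W) (j : Fin (n + 1) → Fin m) (hj : ∀ t, j t ∈ S) :
    (List.ofFn fun t => a t * mono F W [j t] * b t).prod = 0 := by
  have hletter (t : Fin (n + 1)) : a t * mono F W [j t] * b t ∈ spanMonoCountGe F S 1 := by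
    have hx : mono F W [j t] ∈ spanMonoCountGe F S 1 :=
      Submodule.subset_span ⟨[j t], by simp [hj t], rfl⟩
    have h := mul_mem_spanMonoCountGe F S
      (mul_mem_spanMonoCountGe F S (mem_spanMonoCountGe_zero F S (a t)) hx)
      (mem_spanMonoCountGe_zero F S (b t))
    rwa [zero_add, add_zero] at h
  have hprod := list_prod_mem_spanMonoCountGe F S _ hletter
  rwa [spanMonoCountGe_succ_eq_bot F S hW, Submodule.mem_bot] at hprod

end Nilpotent

section FreeQuotient

variable {W : Set (List (Fin m))} (S : Set (Fin m)) [DecidablePred (· ∈ S)]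

def letterToFree (j : Fin m) : FreeAlgebra F {j : Fin m // j ∉ S} :=
  if h : j ∈ S then 0 else FreeAlgebra.ι F ⟨j, h⟩

def freeAlgToFree : FreeAlg F m →ₐ[F] FreeAlgebra F {j : Fin m // j ∉ S} :=
  MonoidAlgebra.lift F _ (FreeMonoid (Fin m)) (FreeMonoid.lift (letterToFree F S))

theorem freeAlgToFree_wordElem (u : List (Fin m)) :
    freeAlgToFree F S (wordElem F u) = (u.map (letterToFree F S)).prod := by
  rw [freeAlgToFree, wordElem, MonoidAlgebra.lift_of, FreeMonoid.lift_ofList]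

variable {S} (hW : ∀ w ∈ W, ∃ j ∈ S, j ∈ w)
include hW

theorem freeAlgToFree_monRel ⦃a b : FreeAlg F m⦄
    (hab : monRel F (W ∪ {u | ∃ j ∈ S, u = [j]}) a b) :
    freeAlgToFree F S a = freeAlgToFree F S b := by
  obtain ⟨⟨u, hu, rfl⟩, rfl⟩ := hab
  rw [map_zero, freeAlgToFree_wordElem]
  obtain ⟨j, hjS, hju⟩ : ∃ j ∈ S, j ∈ u :=
    hu.elim (hW u) fun ⟨j, hj, hu⟩ => ⟨j, hj, hu ▸ List.mem_singleton_self j⟩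
  exact List.prod_eq_zero (List.mem_map.mpr ⟨j, hju, dif_pos hjS⟩)

def monAlgToFree :
    MonAlg F (W ∪ {u | ∃ j ∈ S, u = [j]}) →ₐ[F] FreeAlgebra F {j : Fin m // j ∉ S} :=
  RingQuot.liftAlgHom F ⟨freeAlgToFree F S, freeAlgToFree_monRel F hW⟩

theorem monAlgToFree_mono (u : List (Fin m)) :
    monAlgToFree F hW (mono F _ u) = (u.map (letterToFree F S)).prod := by
  rw [monAlgToFree, mono, monAlgPi, RingQuot.liftAlgHom_mkAlgHom_apply, freeAlgToFree_wordElem]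

def monAlgEquivFreeAlgebra :
    MonAlg F (W ∪ {u | ∃ j ∈ S, u = [j]}) ≃ₐ[F] FreeAlgebra F {j : Fin m // j ∉ S} :=
  AlgEquiv.ofAlgHom (monAlgToFree F hW) (FreeAlgebra.lift F fun j => mono F _ [j.1])
    (FreeAlgebra.hom_ext <| funext fun j => by
      change monAlgToFree F hW (FreeAlgebra.lift F _ (FreeAlgebra.ι F j)) = FreeAlgebra.ι F j
      rw [FreeAlgebra.lift_ι_apply, monAlgToFree_mono, List.map_singleton, List.prod_singleton,
        letterToFree, dif_neg j.2])
    (by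
      apply RingQuot.ringQuot_ext'
      refine MonoidAlgebra.algHom_ext' (FreeMonoid.hom_eq fun a => ?_) (Subsingleton.elim _ _)
      change FreeAlgebra.lift F _ (monAlgToFree F hW (mono F _ [a])) = mono F _ [a]
      rw [monAlgToFree_mono, List.map_singleton, List.prod_singleton, letterToFree]
      split_ifs with ha
      · rw [map_zero, mono_of_mem F (Or.inr ⟨a, ha, rfl⟩)]
      · rw [FreeAlgebra.lift_ι_apply])

end FreeQuotient

/-- Let `A` be a prolongable monomial algebra such that for every
`n` there is an `n`-maximal tree over `A` (this holds when the proalgebraic variety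
of point modules of `A` is irreducible).  Then there is a subset `S` of the
generators such that the two-sided ideal `N` of `A` generated by `S` is nilpotent
and `A/N` is isomorphic to the free algebra on the remaining generators.  (Here
`A/N` is realized as the monomial algebra whose forbidden words are those of `A`
together with the letters of `S`, and nilpotency of `N` is expressed by the
vanishing of all length-`k` products of elements `a·x_j·b` with `j ∈ S`.) -/
theorem statement17 (F : Type) [Field F] (m : ℕ) (W : Set (List (Fin m)))
    (hpro : Prolongable F W)
    (hmax : ∀ n : ℕ, ∃ C : ℕ → Set (Fin m), IsTree F W C ∧
        ∀ C' : ℕ → Set (Fin m), IsTree F W C' → ∀ i ≤ n, C' i ⊆ C i) :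
    ∃ S : Set (Fin m),
      (∃ k : ℕ, 1 ≤ k ∧ ∀ (a b : Fin k → MonAlg F W) (j : Fin k → Fin m),
          (∀ t, j t ∈ S) →
            (List.ofFn fun t => a t * mono F W [j t] * b t).prod = 0) ∧
      Nonempty
        (MonAlg F (W ∪ { u : List (Fin m) | ∃ j ∈ S, u = [j] }) ≃ₐ[F]
          FreeAlgebra F { j : Fin m // j ∉ S }) := by
  classical
  obtain ⟨n₀, hn₀⟩ := maxTree_eventually_const hmax
  set T := maxTree hmax n₀
  have hcount (u : List (Fin m)) (hu : mono F W u ≠ 0) : u.countP (· ∈ Tᶜ) ≤ n₀ :=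
    countP_le_of_getElem_notMem Tᶜ fun k hk hk₀ hkT =>
      hkT (hn₀ k hk₀ ▸ getElem_mem_maxTree hpro hmax hu hk)
  have hforbidden (w : List (Fin m)) (hw : w ∈ W) : ∃ j ∈ Tᶜ, j ∈ w := by
    by_contra h
    exact mono_ne_zero_of_forall_mem_maxTree hmax hn₀
      (fun j hj => by_contra fun hjT => h ⟨j, hjT, hj⟩) (mono_of_mem F hw)
  exact ⟨Tᶜ, ⟨n₀ + 1, by omega, list_prod_letters_eq_zero F Tᶜ hcount⟩,
    ⟨monAlgEquivFreeAlgebra F hforbidden⟩⟩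
end
end

section
/- Let w be a Sturmian word over the two-letter alphabet Σ = {x_0, x_1}, i.e. an infinite word with exactly n+1 distinct factors of length n for every n ≥ 1, and let A = A_w be the associated monomial algebra. Then every tree (C_i)_{i≥0} over A satisfies |C_0| ≤ 2 and |C_i| = 1 for all i ≥ 1, and there is exactly one tree (C_i)_{i≥0} over A with |C_0| = 2. -/
/-!
The nonzero monomials of `A_w` are exactly the factors of `w` (words act faithfully on functions
on the set of factors), so a tree is a sequence of nonempty letter sets all of whose selections
are factors of `w`.

Every factor of a Sturmian word recurs (Morse–Hedlund), so `p(n + 1) - p(n) = 1` counts the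
left special factors of length `n`: there is exactly one, and these are the prefixes of a single
infinite word `v`. A tree with `|C_0| = 2` is therefore `Σ, {v_0}, {v_1}, …`.

If `C_{i+1} = Σ` for a tree, then for some letter `a` and infinite word `v'` the words
`a c v'_0 ⋯ v'_{n-1}` are factors for both letters `c`, so `v'` is the left special branch. Whenever
`a^{k+1}` is a factor, `a^k` is left special, hence equals `v'_0 ⋯ v'_{k-1}`, and so
`a^{k+2} = a a v'_0 ⋯ v'_{k-1}` is a factor. All powers of `a` would then be left special factors,
but `a^g b`, read off a block `b a^g b`, is left special as well.
-/

noncomputable section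

open scoped BigOperators

variable (F : Type) [Field F] {m : ℕ}

/-- The set of finite factors (subwords) of the right-infinite word `w`. -/
def factorsOf (w : ℕ → Fin m) : Set (List (Fin m)) :=
  { u | ∃ i : ℕ, u = (List.range u.length).map fun k => w (i + k) }

/-- `w` is uniformly recurrent: every factor `u` of `w` occurs in every sufficiently
long factor of `w`. -/
def UniformlyRecurrent (w : ℕ → Fin m) : Prop :=
  ∀ u ∈ factorsOf w, ∃ C : ℕ, ∀ v ∈ factorsOf w, v.length = C → u <:+: v

/-- `w` is eventually periodic. -/
def EventuallyPeriodic (w : ℕ → Fin m) : Prop :=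
  ∃ p : ℕ, 0 < p ∧ ∃ N : ℕ, ∀ i : ℕ, N ≤ i → w (i + p) = w i
section Window

variable {x y : ℕ → Fin m}

/-- By definition of `factorsOf`, the factors of `x` are exactly its windows. -/
def window (x : ℕ → Fin m) (i n : ℕ) : List (Fin m) :=
  (List.range n).map fun k => x (i + k)

@[simp] lemma length_window (i n : ℕ) : (window x i n).length = n := by
  simp [window]

@[simp] lemma getElem_window {i n k : ℕ} (h : k < (window x i n).length) :
    (window x i n)[k] = x (i + k) := by
  simp [window]

lemma window_eq_window_iff {i j n : ℕ} :
    window x i n = window y j n ↔ ∀ k < n, x (i + k) = y (j + k) := by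
  simp [window, List.map_inj_left]

lemma window_add (i n k : ℕ) : window x i (n + k) = window x i n ++ window x (i + n) k := by
  simp only [window, List.range_add, List.map_append, List.map_map]
  congr 2
  ext t
  simp [add_assoc]

lemma window_succ (i n : ℕ) : window x i (n + 1) = x i :: window x (i + 1) n := by
  rw [add_comm n, window_add]
  simp [window]

lemma window_one (i : ℕ) : window x i 1 = [x i] := rfl

lemma window_eq_replicate {i n : ℕ} {a : Fin m} (h : ∀ k < n, x (i + k) = a) :
    window x i n = List.replicate n a :=
  List.eq_replicate_iff.2 ⟨length_window i n, by simpa [window] using h⟩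

lemma take_window (i n k : ℕ) : (window x i n).take k = window x i (min k n) := by
  apply List.ext_getElem (by simp)
  intro t _ _
  simp

lemma drop_window (i n k : ℕ) : (window x i n).drop k = window x (i + k) (n - k) := by
  apply List.ext_getElem (by simp)
  intro t _ _
  simp [add_assoc]

lemma window_mem_factorsOf (i n : ℕ) : window x i n ∈ factorsOf x :=
  ⟨i, by simp [window]⟩

lemma cons_window_mem_factorsOf (i n : ℕ) : x i :: window x (i + 1) n ∈ factorsOf x :=
  window_succ (x := x) i n ▸ window_mem_factorsOf i (n + 1)

lemma exists_window_eq_of_mem_factorsOf {u : List (Fin m)} (hu : u ∈ factorsOf x) :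
    ∃ i, window x i u.length = u :=
  hu.imp fun _ => Eq.symm

lemma mem_factorsOf_of_infix {u v : List (Fin m)} (huv : u <:+: v) (hv : v ∈ factorsOf x) :
    u ∈ factorsOf x := by
  obtain ⟨s, t, rfl⟩ := huv
  obtain ⟨i, hi⟩ := exists_window_eq_of_mem_factorsOf hv
  have : ((s ++ u ++ t).drop s.length).take u.length = u := by simp
  rw [← this, ← hi, drop_window, take_window]
  exact window_mem_factorsOf _ _

end Window

section Complexity

variable {x : ℕ → Fin m}

def complexity (x : ℕ → Fin m) (n : ℕ) : ℕ :=
  (Set.range fun i => window x i n).ncard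

lemma finite_range_window (n : ℕ) : (Set.range fun i => window x i n).Finite :=
  (List.finite_length_eq (Fin m) n).subset (by rintro _ ⟨i, rfl⟩; simp)

lemma range_window_eq (x : ℕ → Fin m) (n : ℕ) :
    (Set.range fun i => window x i n) = {u | u ∈ factorsOf x ∧ u.length = n} := by
  ext u
  constructor
  · rintro ⟨i, rfl⟩
    exact ⟨window_mem_factorsOf i n, length_window i n⟩
  · rintro ⟨hu, rfl⟩
    exact exists_window_eq_of_mem_factorsOf hu

lemma complexity_zero : complexity x 0 = 1 := by
  simp [complexity, window]

lemma range_window_eq_image_take (n : ℕ) :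
    (Set.range fun i => window x i n) = List.take n '' Set.range fun i => window x i (n + 1) := by
  rw [← Set.range_comp]
  congr 1
  ext1 i
  simp [take_window]

lemma complexity_le_succ (n : ℕ) : complexity x n ≤ complexity x (n + 1) := by
  rw [complexity, range_window_eq_image_take]
  exact Set.ncard_image_le (finite_range_window _)

lemma eq_of_window_eq_of_complexity_succ_le {k : ℕ} (h : complexity x (k + 1) ≤ complexity x k)
    {i j : ℕ} (hij : window x i k = window x j k) : x (i + k) = x (j + k) := by
  have hinj : Set.InjOn (List.take k) (Set.range fun i => window x i (k + 1)) := by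
    refine Set.injOn_of_ncard_image_eq ?_ (finite_range_window _)
    rw [← range_window_eq_image_take]
    exact le_antisymm (complexity_le_succ k) h
  have hsucc : window x i (k + 1) = window x j (k + 1) :=
    hinj (Set.mem_range_self i) (Set.mem_range_self j) (by simpa [take_window] using hij)
  exact window_eq_window_iff.1 hsucc k (by omega)

/-- Two equal windows exist by pigeonhole; determinism propagates their agreement forever. -/
lemma eventuallyPeriodic_of_window_determines {k : ℕ}
    (det : ∀ i j, window x i k = window x j k → x (i + k) = x (j + k)) : EventuallyPeriodic x := by
  obtain ⟨i, j, hij, hwin⟩ := Set.Finite.exists_lt_map_eq_of_forall_mem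
    (f := fun i => window x i k) Set.mem_range_self (finite_range_window k)
  have key : ∀ t, x (i + t) = x (j + t) := by
    intro t
    induction t using Nat.strong_induction_on with
    | _ t ih =>
      by_cases ht : t < k
      · exact window_eq_window_iff.1 hwin t ht
      · have := det (i + (t - k)) (j + (t - k)) <| window_eq_window_iff.2 fun s hs => by
          simpa [add_assoc] using ih (t - k + s) (by omega)
        simpa [add_assoc, Nat.sub_add_cancel (not_lt.1 ht)] using this
  refine ⟨j - i, by omega, i, fun s hs => ?_⟩
  simpa [show j + (s - i) = s + (j - i) by omega, show i + (s - i) = s by omega]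
    using (key (s - i)).symm

/-- Morse–Hedlund. -/
lemma eventuallyPeriodic_of_complexity_le {n : ℕ} (h : complexity x n ≤ n) :
    EventuallyPeriodic x := by
  by_contra hx
  have hlt : ∀ k, complexity x k < complexity x (k + 1) := fun k =>
    lt_of_not_ge fun hk => hx (eventuallyPeriodic_of_window_determines
      fun _ _ => eq_of_window_eq_of_complexity_succ_le hk)
  have hgrow : ∀ k, k + 1 ≤ complexity x k := by
    intro k
    induction k with
    | zero => simp [complexity_zero]
    | succ k ih => exact (hlt k).trans_le' (by omega)
  have := hgrow n
  omega

lemma EventuallyPeriodic.complexity_le (hx : EventuallyPeriodic x) :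
    ∃ B, ∀ n, complexity x n ≤ B := by
  obtain ⟨p, hp, N, hper⟩ := hx
  refine ⟨N + p, fun n => ?_⟩
  have hback : ∀ i, ∃ i' < N + p, window x i n = window x i' n := by
    intro i
    induction i using Nat.strong_induction_on with
    | _ i ih =>
      by_cases hi : i < N + p
      · exact ⟨i, hi, rfl⟩
      · obtain ⟨i', hi', he⟩ := ih (i - p) (by omega)
        refine ⟨i', hi', Eq.trans (window_eq_window_iff.2 fun k _ => ?_) he⟩
        simpa [show i - p + k + p = i + k by omega] using hper (i - p + k) (by omega)
  calc complexity x n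
      ≤ ((fun i => window x i n) '' ↑(Finset.range (N + p))).ncard := by
        refine Set.ncard_le_ncard ?_ (Set.toFinite _)
        rintro _ ⟨i, rfl⟩
        obtain ⟨i', hi', he⟩ := hback i
        exact ⟨i', by simpa using hi', he.symm⟩
    _ ≤ N + p := by
        refine (Set.ncard_image_le (Set.toFinite _)).trans ?_
        simp

lemma EventuallyPeriodic.of_shift {N : ℕ} (h : EventuallyPeriodic fun t => x (N + t)) :
    EventuallyPeriodic x := by
  obtain ⟨p, hp, N', hper⟩ := h
  refine ⟨p, hp, N + N', fun i hi => ?_⟩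
  simpa [show N + (i - N + p) = i + p by omega, show N + (i - N) = i by omega]
    using hper (i - N) (by omega)

end Complexity

def IsSturmian (w : ℕ → Fin 2) : Prop :=
  ∀ n, complexity w n = n + 1

def IsLeftSpecial (w : ℕ → Fin 2) (u : List (Fin 2)) : Prop :=
  ∀ c, c :: u ∈ factorsOf w

section Sturmian

variable {w : ℕ → Fin 2} {a b : Fin 2} {u : List (Fin 2)}

lemma IsLeftSpecial.mem (h : IsLeftSpecial w u) : u ∈ factorsOf w :=
  mem_factorsOf_of_infix (List.suffix_cons 0 u).isInfix (h 0)

lemma isLeftSpecial_of_cons_mem (hab : a ≠ b) (ha : a :: u ∈ factorsOf w)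
    (hb : b :: u ∈ factorsOf w) : IsLeftSpecial w u := by
  intro c
  obtain rfl | rfl : c = a ∨ c = b := by omega
  exacts [ha, hb]

lemma IsLeftSpecial.take (h : IsLeftSpecial w u) (k : ℕ) : IsLeftSpecial w (u.take k) := fun c =>
  mem_factorsOf_of_infix (List.take_prefix (k + 1) (c :: u)).isInfix (h c)

variable (hw : IsSturmian w)
include hw

lemma IsSturmian.not_eventuallyPeriodic : ¬ EventuallyPeriodic w := fun hper => by
  obtain ⟨B, hB⟩ := hper.complexity_le
  have := hB B
  rw [hw B] at this
  omega

/-- Otherwise the tail of `w` beyond the last occurrence has at most `n` factors of length `n`,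
hence is eventually periodic. -/
lemma IsSturmian.exists_window_eq (i n N : ℕ) : ∃ j, N ≤ j ∧ window w j n = window w i n := by
  by_contra! hlate
  apply hw.not_eventuallyPeriodic
  apply EventuallyPeriodic.of_shift (N := N)
  apply eventuallyPeriodic_of_complexity_le (n := n)
  have hsub : (Set.range fun j => window (fun t => w (N + t)) j n) ⊆
      (Set.range fun j => window w j n) \ {window w i n} := by
    rintro _ ⟨j, rfl⟩
    have hj : window (fun t => w (N + t)) j n = window w (N + j) n :=
      window_eq_window_iff.2 fun k _ => by simp [add_assoc]
    dsimp only
    rw [hj]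
    exact ⟨Set.mem_range_self _, hlate (N + j) (by omega)⟩
  calc complexity (fun t => w (N + t)) n
      ≤ ((Set.range fun j => window w j n) \ {window w i n}).ncard :=
        Set.ncard_le_ncard hsub ((finite_range_window n).sdiff)
    _ = n := by
        rw [Set.ncard_sdiff_singleton_of_mem (Set.mem_range_self i)]
        have := hw n
        rw [complexity] at this
        omega

lemma IsSturmian.exists_cons_mem (hu : u ∈ factorsOf w) : ∃ c, c :: u ∈ factorsOf w := by
  obtain ⟨i, hi⟩ := exists_window_eq_of_mem_factorsOf hu
  obtain ⟨j, hj, hji⟩ := hw.exists_window_eq i u.length 1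
  have hcons : window w (j - 1) (u.length + 1) = w (j - 1) :: window w j u.length := by
    rw [window_succ, Nat.sub_add_cancel hj]
  refine ⟨w (j - 1), ?_⟩
  rw [← hi, ← hji, ← hcons]
  exact window_mem_factorsOf _ _

lemma IsSturmian.exists_eq (b : Fin 2) (N : ℕ) : ∃ t, N ≤ t ∧ w t = b := by
  by_contra! hb
  exact hw.not_eventuallyPeriodic ⟨1, one_pos, N, fun t ht => by
    have := hb t ht
    have := hb (t + 1) (by omega)
    omega⟩

lemma IsSturmian.exists_cons_replicate_append_mem (hab : a ≠ b) (hu : u ∈ factorsOf w) :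
    ∃ g, b :: (List.replicate g a ++ u) ∈ factorsOf w := by
  obtain ⟨q, -, hq⟩ := hw.exists_eq b 0
  obtain ⟨i, hi⟩ := exists_window_eq_of_mem_factorsOf hu
  obtain ⟨p, hp, hpi⟩ := hw.exists_window_eq i u.length (q + 1)
  set q' := Nat.findGreatest (fun t => w t = b) (p - 1)
  have hq' : w q' = b :=
    Nat.findGreatest_spec (P := fun t => w t = b) (n := p - 1) (m := q) (by omega) hq
  have hq'p : q' < p := by
    have : q' ≤ p - 1 := Nat.findGreatest_le (p - 1)
    omega
  set g := p - q' - 1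
  refine ⟨g, ?_⟩
  have hgap : window w (q' + 1) g = List.replicate g a :=
    window_eq_replicate fun k hk => by
      have := Nat.findGreatest_is_greatest (P := fun t => w t = b) (n := p - 1) (k := q' + 1 + k)
        (by omega) (by omega)
      omega
  have hsplit : window w q' (g + 1 + u.length) = b :: (List.replicate g a ++ u) := by
    rw [window_add, window_succ, show q' + (g + 1) = p by omega, hpi, hi, hgap, hq',
      List.cons_append]
  rw [← hsplit]
  exact window_mem_factorsOf _ _

lemma IsSturmian.exists_append_replicate_append_mem (hab : a ≠ b) (hu : u ∈ factorsOf w) :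
    ∃ g, u ++ List.replicate g a ++ [b] ∈ factorsOf w := by
  obtain ⟨i, hi⟩ := exists_window_eq_of_mem_factorsOf hu
  have hex : ∃ s, w (i + u.length + s) = b := by
    obtain ⟨t, ht, htb⟩ := hw.exists_eq b (i + u.length)
    exact ⟨t - (i + u.length), by rwa [Nat.add_sub_cancel' ht]⟩
  set g := Nat.find hex
  refine ⟨g, ?_⟩
  have hgap : window w (i + u.length) g = List.replicate g a :=
    window_eq_replicate fun k hk => by
      have := Nat.find_min hex hk
      omega
  have hsplit : window w i (u.length + g + 1) = u ++ List.replicate g a ++ [b] := by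
    rw [window_add, window_add, hi, hgap, window_one, ← add_assoc, Nat.find_spec hex]
  rw [← hsplit]
  exact window_mem_factorsOf _ _

lemma IsSturmian.exists_isLeftSpecial (n : ℕ) : ∃ u, u.length = n ∧ IsLeftSpecial w u := by
  by_contra! hnone
  have hinj : Set.InjOn List.tail (Set.range fun i => window w i (n + 1)) := by
    rintro _ ⟨i, rfl⟩ _ ⟨j, rfl⟩ hij
    simp only [window_succ, List.tail_cons] at hij ⊢
    by_contra hne
    refine hnone _ (length_window (j + 1) n) (isLeftSpecial_of_cons_mem (a := w i) (b := w j)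
      (fun h => hne (by rw [h, hij])) ?_ (cons_window_mem_factorsOf j n))
    rw [← hij]
    exact cons_window_mem_factorsOf i n
  have := Set.ncard_le_ncard_of_injOn (t := Set.range fun i => window w i n) List.tail
    (by rintro _ ⟨i, rfl⟩; exact ⟨i + 1, by simp [window_succ]⟩) hinj (finite_range_window n)
  have h1 := hw (n + 1)
  have h2 := hw n
  rw [complexity] at h1 h2
  omega

/-- Counting left extensions: two distinct left special factors of length `n` would give at least
`(n + 1) + 2` factors of length `n + 1`. -/
lemma IsSturmian.isLeftSpecial_unique {v : List (Fin 2)} (hu : IsLeftSpecial w u)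
    (hv : IsLeftSpecial w v) (hlen : u.length = v.length) : u = v := by
  by_contra huv
  set n := u.length
  have hfac (k : ℕ) := range_window_eq w k
  have hsub : {0 :: u, 0 :: v} ⊆ Set.range fun i => window w i (n + 1) := by
    rw [hfac]
    rintro _ (rfl | rfl)
    exacts [⟨hu 0, rfl⟩, ⟨hv 0, by simp [hlen, n]⟩]
  have hcover : (Set.range fun i => window w i n) ⊆
      List.tail '' ((Set.range fun i => window w i (n + 1)) \ {0 :: u, 0 :: v}) := by
    rw [hfac, hfac]
    rintro z ⟨hz, hzlen⟩
    obtain ⟨c, hc, hcz⟩ : ∃ c, c :: z ∈ factorsOf w ∧ c :: z ∉ ({0 :: u, 0 :: v} : Set _) := by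
      by_cases hzuv : z = u ∨ z = v
      · refine ⟨1, ?_, by simp⟩
        rcases hzuv with rfl | rfl
        exacts [hu 1, hv 1]
      · obtain ⟨c, hc⟩ := hw.exists_cons_mem hz
        refine ⟨c, hc, ?_⟩
        simp only [Set.mem_insert_iff, Set.mem_singleton_iff, List.cons.injEq]
        tauto
    exact ⟨c :: z, ⟨⟨hc, by simp [hzlen]⟩, hcz⟩, rfl⟩
  have hcard := (Set.ncard_le_ncard hcover ((finite_range_window _).sdiff.image _)).trans
    (Set.ncard_image_le (finite_range_window _).sdiff)
  rw [Set.ncard_sdiff hsub, Set.ncard_pair (by simpa using huv)] at hcard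
  have h1 := hw (n + 1)
  have h2 := hw n
  rw [complexity] at h1 h2
  omega

lemma IsSturmian.isLeftSpecial_replicate (hab : a ≠ b) {k : ℕ}
    (h : List.replicate (k + 1) a ∈ factorsOf w) : IsLeftSpecial w (List.replicate k a) := by
  refine isLeftSpecial_of_cons_mem hab h ?_
  obtain ⟨g, hg⟩ := hw.exists_cons_replicate_append_mem hab
    (mem_factorsOf_of_infix (List.suffix_cons a _).isInfix h)
  rw [← List.replicate_add, add_comm, List.replicate_add] at hg
  exact mem_factorsOf_of_infix (List.prefix_append (b :: List.replicate k a) _).isInfix hg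

lemma IsSturmian.exists_replicate_not_mem (a : Fin 2) :
    ∃ k, List.replicate k a ∉ factorsOf w := by
  by_contra! hall
  obtain ⟨b, hba⟩ := exists_ne a
  have hab : a ≠ b := hba.symm
  obtain ⟨g, hg⟩ := hw.exists_append_replicate_append_mem hab (u := [b])
    (hw.isLeftSpecial_replicate hab (hall 1) b)
  obtain ⟨h, hh⟩ := hw.exists_append_replicate_append_mem hab (hall (g + 1))
  have hls : IsLeftSpecial w (List.replicate g a ++ [b]) := by
    refine isLeftSpecial_of_cons_mem hab ?_ (by simpa using hg)
    rw [← List.replicate_add, add_comm, List.replicate_add, List.append_assoc] at hh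
    exact mem_factorsOf_of_infix (List.suffix_append _ _).isInfix hh
  have := hw.isLeftSpecial_unique hls (hw.isLeftSpecial_replicate hab (hall (g + 2))) (by simp)
  rw [List.replicate_succ', List.append_cancel_left_eq] at this
  simp_all

lemma IsSturmian.not_forall_cons_cons_window_mem (a : Fin 2) (v : ℕ → Fin 2) (j : ℕ) :
    ¬ ∀ n c, a :: c :: window v j n ∈ factorsOf w := by
  intro H
  obtain ⟨b, hba⟩ := exists_ne a
  have hstep (k : ℕ) (hk : List.replicate (k + 1) a ∈ factorsOf w) :
      List.replicate (k + 2) a ∈ factorsOf w := by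
    have hls (n : ℕ) : IsLeftSpecial w (window v j n) := fun c =>
      mem_factorsOf_of_infix (List.suffix_cons a _).isInfix (H n c)
    have := hw.isLeftSpecial_unique (hls k) (hw.isLeftSpecial_replicate hba.symm hk) (by simp)
    simpa [this, List.replicate_succ] using H k a
  have hpos (k : ℕ) : List.replicate (k + 1) a ∈ factorsOf w := by
    induction k with
    | zero => exact mem_factorsOf_of_infix (List.prefix_append [a] _).isInfix (H 0 a)
    | succ k ih => exact hstep k ih
  obtain ⟨k, hk⟩ := hw.exists_replicate_not_mem a
  exact hk (mem_factorsOf_of_infix (List.prefix_append _ [a]).isInfix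
    (List.replicate_succ' (n := k) ▸ hpos k))

lemma IsSturmian.exists_isLeftSpecial_window :
    ∃ v : ℕ → Fin 2, ∀ n, IsLeftSpecial w (window v 0 n) := by
  choose L hlen hls using hw.exists_isLeftSpecial
  have htake {k n : ℕ} (hkn : k ≤ n) : (L n).take k = L k :=
    hw.isLeftSpecial_unique ((hls n).take k) (hls k) (by simp [hlen, hkn])
  refine ⟨fun k => (L (k + 1)).getD k 0, fun n => ?_⟩
  convert hls n using 1
  refine List.ext_getElem (by simp [hlen]) fun k hk _ => ?_
  rw [getElem_window, zero_add, ← htake (show k + 1 ≤ n by simpa using hk)]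
  simp [List.getElem?_eq_getElem (show k < (L n).length by simpa [hlen] using hk)]

lemma IsSturmian.eq_of_isLeftSpecial_window {v y : ℕ → Fin 2}
    (hv : ∀ n, IsLeftSpecial w (window v 0 n)) (hy : ∀ n, IsLeftSpecial w (window y 0 n)) :
    v = y := by
  funext k
  simpa using window_eq_window_iff.1 (hw.isLeftSpecial_unique (hv (k + 1)) (hy (k + 1)) (by simp))
    k (by omega)

end Sturmian

section MonomialBasis

variable {L : Set (List (Fin m))}

open Classical in
def appendOp (L : Set (List (Fin m))) (c : Fin m) : Module.End F (L → F) :=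
  LinearMap.pi fun z => if h : z.1 ++ [c] ∈ L then LinearMap.proj ⟨_, h⟩ else 0

def appendRep (L : Set (List (Fin m))) : FreeMonoid (Fin m) →* Module.End F (L → F) :=
  FreeMonoid.lift (appendOp F L)

open Classical in
lemma appendRep_ofList_apply (hL : ∀ ⦃u v⦄, u <:+: v → v ∈ L → u ∈ L) (u : List (Fin m))
    (f : L → F) (z : L) :
    appendRep F L (FreeMonoid.ofList u) f z = if h : z.1 ++ u ∈ L then f ⟨_, h⟩ else 0 := by
  induction u generalizing z with
  | nil => simp [appendRep]
  | cons c u ih =>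
    rw [FreeMonoid.ofList_cons, map_mul, Module.End.mul_apply]
    change appendOp F L c _ z = _
    simp only [appendOp, LinearMap.pi_apply]
    by_cases h1 : z.1 ++ [c] ∈ L
    · simp only [dif_pos h1, LinearMap.proj_apply, ih, List.append_assoc, List.singleton_append]
    · have h2 : z.1 ++ c :: u ∉ L := fun h => h1 (hL ⟨[], u, by simp⟩ h)
      simp [h1, h2]

lemma mono_eq_zero_of_mem {W : Set (List (Fin m))} {u : List (Fin m)} (hu : u ∈ W) :
    mono F W u = 0 := by
  rw [mono, monAlgPi, RingQuot.mkAlgHom_rel F (s := monRel F W) ⟨⟨u, hu, rfl⟩, rfl⟩, map_zero]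

lemma mono_ne_zero_of_mem (hL : ∀ ⦃u v⦄, u <:+: v → v ∈ L → u ∈ L) {u : List (Fin m)}
    (hu : u ∈ L) : mono F Lᶜ u ≠ 0 := by
  have hkill : ∀ ⦃a b⦄, monRel F Lᶜ a b →
      MonoidAlgebra.lift F _ _ (appendRep F L) a = MonoidAlgebra.lift F _ _ (appendRep F L) b := by
    rintro _ _ ⟨⟨v, hv, rfl⟩, rfl⟩
    ext f z
    rw [wordElem, MonoidAlgebra.lift_of, appendRep_ofList_apply F hL,
      dif_neg fun h => hv (hL (List.suffix_append _ _).isInfix h)]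
    simp
  intro h0
  have := congrArg (fun a => RingQuot.liftAlgHom F ⟨_, hkill⟩ a (fun _ => (1 : F))
    ⟨[], hL List.nil_infix hu⟩) h0
  simp only [mono, monAlgPi, RingQuot.liftAlgHom_mkAlgHom_apply, wordElem, MonoidAlgebra.lift_of,
    appendRep_ofList_apply F hL, List.nil_append, dif_pos hu, map_zero] at this
  exact one_ne_zero this

theorem mono_ne_zero_iff (hL : ∀ ⦃u v⦄, u <:+: v → v ∈ L → u ∈ L) {u : List (Fin m)} :
    mono F Lᶜ u ≠ 0 ↔ u ∈ L :=
  ⟨fun h => by_contra fun hu => h (mono_eq_zero_of_mem F hu), mono_ne_zero_of_mem F hL⟩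

end MonomialBasis

section Tree

variable {C : ℕ → Set (Fin m)} {i : ℕ} {u : List (Fin m)}

lemma selectsFrom_iff : SelectsFrom C i u ↔ ∀ k (h : k < u.length), u[k] ∈ C (i + k) := Iff.rfl

lemma selectsFrom_cons_iff {a : Fin m} :
    SelectsFrom C i (a :: u) ↔ a ∈ C i ∧ SelectsFrom C (i + 1) u := by
  simp only [selectsFrom_iff, List.length_cons]
  constructor
  · intro h
    refine ⟨h 0 (by omega), fun k hk => ?_⟩
    have := h (k + 1) (by omega)
    rwa [List.getElem_cons_succ, ← add_assoc, add_right_comm] at this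
  · rintro ⟨ha, hu⟩ (_ | k) hk
    · exact ha
    · rw [List.getElem_cons_succ, ← add_assoc, add_right_comm]
      exact hu k (by omega)

lemma selectsFrom_window {s : ℕ → Fin m} (hs : ∀ k, s k ∈ C k) (i n : ℕ) :
    SelectsFrom C i (window s i n) := by
  simp [selectsFrom_iff, hs]

def branchTree (v : ℕ → Fin m) : ℕ → Set (Fin m)
  | 0 => Set.univ
  | i + 1 => {v i}

lemma selectsFrom_branchTree_succ_iff {v : ℕ → Fin m} :
    SelectsFrom (branchTree v) (i + 1) u ↔ window v i u.length = u := by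
  simp only [selectsFrom_iff, List.ext_getElem_iff, length_window, getElem_window, true_and,
    show ∀ k, i + 1 + k = i + k + 1 by omega, branchTree, Set.mem_singleton_iff, eq_comm]
  exact ⟨fun h k _ hk => h k hk, fun h k hk => h k (by simpa using hk) hk⟩

lemma IsTree.mem_factorsOf {x : ℕ → Fin m} (hC : IsTree F (factorsOf x)ᶜ C)
    (h : SelectsFrom C i u) : u ∈ factorsOf x :=
  (mono_ne_zero_iff F fun _ _ => mem_factorsOf_of_infix).1 (hC.2 i u h)

lemma isTree_branchTree_iff {w v : ℕ → Fin 2} :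
    IsTree F (factorsOf w)ᶜ (branchTree v) ↔ ∀ n, IsLeftSpecial w (window v 0 n) := by
  constructor
  · intro hT n c
    refine IsTree.mem_factorsOf F (i := 0) hT ?_
    rw [selectsFrom_cons_iff, selectsFrom_branchTree_succ_iff, length_window]
    exact ⟨trivial, rfl⟩
  · intro hls
    refine ⟨fun i => by cases i <;> simp [branchTree], fun i u hu => ?_⟩
    rw [mono_ne_zero_iff F fun _ _ => mem_factorsOf_of_infix]
    rcases i with _ | i
    · rcases u with _ | ⟨c, u⟩
      · exact window_mem_factorsOf 0 0
      · rw [selectsFrom_cons_iff, zero_add, selectsFrom_branchTree_succ_iff] at hu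
        rw [← hu.2]
        exact hls _ c
    · rw [selectsFrom_branchTree_succ_iff] at hu
      have hinf : u <:+: window v 0 (i + u.length) := by
        rw [window_add, zero_add, hu]
        exact (List.suffix_append _ _).isInfix
      exact mem_factorsOf_of_infix hinf (hls _).mem

lemma fin_two_set_eq_univ_of_ncard_ne_one {S : Set (Fin 2)} (hS : S.Nonempty) (h : S.ncard ≠ 1) :
    S = Set.univ := by
  refine Set.eq_of_subset_of_ncard_le (Set.subset_univ S) ?_
  have h2 : S.ncard ≤ 2 := (Set.ncard_le_ncard (Set.subset_univ S)).trans (by simp)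
  have h0 := (Set.ncard_pos S.toFinite).2 hS
  simp only [Set.ncard_univ, Nat.card_eq_fintype_card, Fintype.card_fin]
  omega

variable {w : ℕ → Fin 2} {C : ℕ → Set (Fin 2)}

lemma IsSturmian.ncard_eq_one_of_isTree (hw : IsSturmian w) (hC : IsTree F (factorsOf w)ᶜ C)
    (i : ℕ) : (C (i + 1)).ncard = 1 := by
  by_contra hne
  have huniv := fin_two_set_eq_univ_of_ncard_ne_one (hC.1 (i + 1)) hne
  choose s hs using hC.1
  refine hw.not_forall_cons_cons_window_mem (s i) s (i + 2) fun n c =>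
    IsTree.mem_factorsOf F (i := i) hC ?_
  rw [selectsFrom_cons_iff, selectsFrom_cons_iff, huniv]
  exact ⟨hs i, trivial, selectsFrom_window hs _ _⟩

lemma IsSturmian.eq_branchTree_of_isTree (hw : IsSturmian w) (hC : IsTree F (factorsOf w)ᶜ C)
    (h0 : (C 0).ncard = 2) : ∃ y, C = branchTree y := by
  choose y hy using fun i => Set.ncard_eq_one.1 (hw.ncard_eq_one_of_isTree F hC i)
  refine ⟨y, funext fun i => ?_⟩
  rcases i with _ | i
  · show C 0 = Set.univ
    exact Set.eq_of_subset_of_ncard_le (Set.subset_univ _) (by simp [h0])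
  · exact hy i

end Tree

/-- Let `w` be a Sturmian word over the two-letter alphabet
(`p_w(n) = n + 1` for all `n ≥ 1`) and `A = A_w` the associated monomial algebra
(a monomial `ℙ¹`).  Then every tree `(C_i)` over `A` has `|C_0| ≤ 2` and
`|C_i| = 1` for all `i ≥ 1`, and there is exactly one tree over `A` with
`|C_0| = 2`. -/
theorem statement18 (F : Type) [Field F] (w : ℕ → Fin 2)
    (hsturm : ∀ n : ℕ, 1 ≤ n →
        Nat.card { u : List (Fin 2) // u ∈ factorsOf w ∧ u.length = n } = n + 1) :
    (∀ C : ℕ → Set (Fin 2), IsTree F ((factorsOf w)ᶜ) C →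
        (C 0).ncard ≤ 2 ∧ ∀ i : ℕ, 1 ≤ i → (C i).ncard = 1) ∧
      (∃! C : ℕ → Set (Fin 2),
        IsTree F ((factorsOf w)ᶜ) C ∧ (C 0).ncard = 2) := by
  have hw : IsSturmian w := fun n => by
    rcases n with _ | n
    · exact complexity_zero
    · rw [complexity, range_window_eq, ← Nat.card_coe_set_eq]
      exact hsturm (n + 1) (by omega)
  obtain ⟨v, hv⟩ := hw.exists_isLeftSpecial_window
  refine ⟨fun C hC => ⟨?_, fun i hi => ?_⟩,
    ⟨branchTree v, ⟨(isTree_branchTree_iff F).2 hv, by simp [branchTree]⟩, ?_⟩⟩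
  · exact (Set.ncard_le_ncard (Set.subset_univ _)).trans (by simp)
  · obtain ⟨i, rfl⟩ := Nat.exists_eq_add_of_le' hi
    exact hw.ncard_eq_one_of_isTree F hC i
  · rintro C ⟨hC, h0⟩
    obtain ⟨y, rfl⟩ := hw.eq_branchTree_of_isTree F hC h0
    rw [hw.eq_of_isLeftSpecial_window ((isTree_branchTree_iff F).1 hC) hv]
end
end

section
/- Let w be a k-balanced right-infinite word over a finite alphabet Σ, for some k ≥ 1, and let A_w be the associated monomial algebra. Then for every tree (C_i)_{i≥0} over A_w, the number of indices i with |C_i| ≥ 2 is at most (k+1)·|Σ|. (Consequently, the proalgebraic variety of point modules of A_w is finite-dimensional.) -/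
noncomputable section

open scoped BigOperators

variable (F : Type) [Field F] {m : ℕ}

lemma count_map_range' {m : ℕ} (f : ℕ → Fin m) (L : ℕ) (x : Fin m) :
    ((List.range L).map f).count x = ((Finset.range L).filter fun p => f p = x).card := by
  induction L with
  | zero => simp
  | succ n ih =>
    rw [List.range_succ, List.map_append, List.count_append, Finset.range_add_one,
      Finset.filter_insert]
    by_cases h : f n = x <;>
      simp [h, ih, Finset.card_insert_of_notMem, List.count_singleton, List.count_cons]


/-- Let `w` be a `k`-balanced right-infinite word over a finite
alphabet (`k ≥ 1`): any two equal-length factors contain each letter with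
multiplicities differing by at most `k`.  Then for every tree `(C_i)` over the
monomial algebra `A_w`, the number of indices `i` with `|C_i| ≥ 2` is at most
`(k+1)·|Σ|`.  (Hence the proalgebraic variety of point modules of `A_w` is
finite-dimensional.) -/
theorem statement19 (F : Type) [Field F] (m : ℕ) (k : ℕ) (hk : 1 ≤ k)
    (w : ℕ → Fin m)
    (hbal : ∀ x : Fin m, ∀ u₁ ∈ factorsOf w, ∀ u₂ ∈ factorsOf w,
        u₁.length = u₂.length → |(u₁.count x : ℤ) - (u₂.count x : ℤ)| ≤ (k : ℤ)) :
    ∀ C : ℕ → Set (Fin m), IsTree F ((factorsOf w)ᶜ) C →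
      { i : ℕ | 2 ≤ (C i).ncard }.encard ≤ ((k + 1) * m : ℕ) := by
  classical
  intro C hC
  obtain ⟨hne, hmono⟩ := hC
  -- every selected word is a factor of w
  have hfac : ∀ i u, SelectsFrom C i u → u ∈ factorsOf w := by
    intro i u hu
    by_contra h
    apply hmono i u hu
    have hrel : monRel F ((factorsOf w)ᶜ) (wordElem F u) 0 := ⟨⟨u, h, rfl⟩, rfl⟩
    have := RingQuot.mkAlgHom_rel F hrel
    simpa [mono, monAlgPi] using this
  have hm : 0 < m := by
    obtain ⟨y, _⟩ := hne 0
    exact y.pos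
  by_contra hcard
  push_neg at hcard
  have h1 : (((k + 1) * m + 1 : ℕ) : ℕ∞) ≤ { i : ℕ | 2 ≤ (C i).ncard }.encard := by
    rw [Nat.cast_add, Nat.cast_one]
    exact (ENat.add_one_le_iff (ENat.coe_ne_top _)).mpr hcard
  obtain ⟨T, hTsub, hTcard⟩ := Set.exists_subset_encard_eq h1
  have hTfin : T.Finite := Set.finite_of_encard_eq_coe hTcard
  set Tf := hTfin.toFinset with hTf
  have hTfcard : Tf.card = (k + 1) * m + 1 := by
    have h2 := hTfin.encard_eq_coe_toFinset_card
    rw [hTcard] at h2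
    exact_mod_cast h2.symm
  -- choose two distinct letters at each branching index
  have hpair : ∀ i, ∃ p : Fin m × Fin m, i ∈ Tf → p.1 ∈ C i ∧ p.2 ∈ C i ∧ p.1 ≠ p.2 := by
    intro i
    by_cases hi : i ∈ Tf
    · have hiS : i ∈ { i : ℕ | 2 ≤ (C i).ncard } := hTsub (hTfin.mem_toFinset.mp hi)
      have h2 : 1 < (C i).ncard := hiS
      obtain ⟨a, b, ha, hb, hab⟩ := (Set.one_lt_ncard_iff (Set.toFinite _)).mp h2
      exact ⟨(a, b), fun _ => ⟨ha, hb, hab⟩⟩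
    · exact ⟨(⟨0, hm⟩, ⟨0, hm⟩), fun h => absurd h hi⟩
  choose p hp using hpair
  -- pigeonhole: some letter x is the first choice at more than k branching indices
  have hpig : (Finset.univ : Finset (Fin m)).card * k < Tf.card := by
    rw [hTfcard, Finset.card_univ, Fintype.card_fin]
    nlinarith
  obtain ⟨x, -, hx⟩ := Finset.exists_lt_card_fiber_of_mul_lt_card_of_maps_to
    (f := fun i => (p i).1) (fun a _ => Finset.mem_univ _) hpig
  set B := Tf.filter (fun i => (p i).1 = x) with hB
  have hBT : B ⊆ Tf := Finset.filter_subset _ _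
  set L := Tf.sup id + 1 with hL
  have hBrange : B ⊆ Finset.range L := by
    intro i hi
    exact Finset.mem_range.mpr (Nat.lt_succ_of_le (Finset.le_sup (f := id) (hBT hi)))
  choose c hc using hne
  set u' : ℕ → Fin m := fun i => if i ∈ B then x else c i with hu'
  set v' : ℕ → Fin m := fun i => if i ∈ B then (p i).2 else c i with hv'
  set U := (List.range L).map u' with hU'
  set V := (List.range L).map v' with hV'
  have hpx : ∀ i ∈ B, (p i).1 = x := fun i hi => (Finset.mem_filter.mp hi).2
  have hselU : SelectsFrom C 0 U := by
    intro j hj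
    simp only [hU', List.get_eq_getElem, List.getElem_map, List.getElem_range, zero_add]
    by_cases hjB : j ∈ B
    · have h1 := (hp j (hBT hjB)).1
      rw [hpx j hjB] at h1
      simpa [hu', hjB] using h1
    · simpa [hu', hjB] using hc j
  have hselV : SelectsFrom C 0 V := by
    intro j hj
    simp only [hV', List.get_eq_getElem, List.getElem_map, List.getElem_range, zero_add]
    by_cases hjB : j ∈ B
    · simpa [hv', hjB] using (hp j (hBT hjB)).2.1
    · simpa [hv', hjB] using hc j
  have hUf : U ∈ factorsOf w := hfac 0 U hselU
  have hVf : V ∈ factorsOf w := hfac 0 V hselV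
  have hlen : U.length = V.length := by simp [hU', hV']
  -- counting occurrences of x
  set D := (Finset.range L).filter (fun i => i ∉ B ∧ c i = x) with hD
  have hfu : (Finset.range L).filter (fun i => u' i = x) = B ∪ D := by
    ext i
    by_cases hi : i ∈ B
    · simp [hu', hD, hi, Finset.mem_range.mp (hBrange hi)]
    · simp [hu', hD, hi]
  have hfv : (Finset.range L).filter (fun i => v' i = x) = D := by
    ext i
    by_cases hi : i ∈ B
    · have h2 : (p i).2 ≠ x := by
        rw [← hpx i hi]
        exact ((hp i (hBT hi)).2.2).symm
      simp [hv', hD, hi, h2]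
    · simp [hv', hD, hi]
  have hdisj : Disjoint B D := by
    rw [Finset.disjoint_left]
    intro a ha hb
    exact (Finset.mem_filter.mp hb).2.1 ha
  have hcU : U.count x = B.card + D.card := by
    rw [hU', count_map_range', hfu, Finset.card_union_of_disjoint hdisj]
  have hcV : V.count x = D.card := by
    rw [hV', count_map_range', hfv]
  have hb := hbal x U hUf V hVf hlen
  rw [hcU, hcV] at hb
  have hBk : (B.card : ℤ) ≤ k := by
    push_cast at hb
    simpa using hb
  have : k < B.card := hx
  omega
end
end
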